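/- arXiv:1805.02661 — 8 statements merged into one kernel-verified Lean document; each statement's English description precedes it below -/
import Mathlib

section
/- Let λ ∈ ℂ with λ ≠ 0. For each d ∈ ℕ set c d = (1/(2d+1)!) · iteratedDeriv (2d+1) (fun u : ℂ => u^3 * (-u-λ)^((2*(d:ℤ)-2)) ) λ, which is the residue at u = λ of u^3(-u-λ)^{2(d-1)}/(u-λ)^{2(d+1)}. Then for every z ∈ ℂ with |z| < 1, HasSum (fun d : ℕ => z^d * c d) (1/2 + z/(1-z)). In particular the constant (classical) term equals 1/2 instead of 0, exhibiting a different classical triple intersection number. -/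
open scoped Nat
open Polynomial

/-! For `d ≥ 1` the exponent `2d - 2` is even and nonnegative, so the integrand is the monic
polynomial `u³ (u + Λ)^(2d-2)` of degree `2d + 1`; its `(2d+1)`-st derivative is `(2d+1)!`, hence
`c d = 1`. For `d = 0` the residue is the derivative of `u³ / (u + Λ)²` at `Λ`, namely
`3/4 - 1/4 = 1/2`. The series is therefore `1/2 + ∑_{d ≥ 1} z^d`. -/

namespace Polynomial

theorem iteratedDeriv_eval {𝕜 : Type*} [NontriviallyNormedField 𝕜] (p : 𝕜[X]) (n : ℕ) :
    iteratedDeriv n (fun x => p.eval x) = fun x => (derivative^[n] p).eval x := by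
  induction n with
  | zero => rfl
  | succ n ih =>
    rw [iteratedDeriv_succ, ih]
    funext x
    rw [Function.iterate_succ_apply', Polynomial.deriv]

theorem Monic.iterate_derivative_natDegree {R : Type*} [Semiring R] {p : R[X]} (hp : p.Monic) :
    derivative^[p.natDegree] p = C (p.natDegree ! : R) := by
  have hdeg : (derivative^[p.natDegree] p).natDegree = 0 := by
    have := natDegree_iterate_derivative p p.natDegree
    omega
  rw [eq_C_of_natDegree_eq_zero hdeg, coeff_iterate_derivative, zero_add,
    Nat.descFactorial_self, hp.coeff_natDegree, nsmul_one]

theorem Monic.iteratedDeriv_natDegree_eval {𝕜 : Type*} [NontriviallyNormedField 𝕜] {p : 𝕜[X]}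
    (hp : p.Monic) (x : 𝕜) : iteratedDeriv p.natDegree (fun x => p.eval x) x = p.natDegree ! := by
  simp only [iteratedDeriv_eval, hp.iterate_derivative_natDegree, eval_C]

end Polynomial

theorem hasSum_pow_mul_of_forall_succ_eq_one {K : Type*} [NormedField K] [CompleteSpace K]
    {z a : K} (hz : ‖z‖ < 1) {c : ℕ → K} (h0 : c 0 = a) (hsucc : ∀ k, c (k + 1) = 1) :
    HasSum (fun d => z ^ d * c d) (a + z / (1 - z)) := by
  have hshift : HasSum (fun k => z ^ (k + 1) * c (k + 1)) (z / (1 - z)) := by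
    simpa [hsucc, pow_succ', div_eq_mul_inv] using (hasSum_geometric_of_norm_lt_one hz).mul_left z
  rw [← hasSum_nat_add_iff' 1]
  simpa [h0] using hshift

theorem hasDerivAt_cube_mul_neg_sub_zpow_neg_two {Λ : ℂ} (hΛ : Λ ≠ 0) :
    HasDerivAt (fun u : ℂ => u ^ 3 * (-u - Λ) ^ (-2 : ℤ)) (1 / 2) Λ := by
  have hquot : (fun u : ℂ => u ^ 3 * (-u - Λ) ^ (-2 : ℤ)) = fun u => u ^ 3 / (u + Λ) ^ 2 := by
    funext u
    rw [show -u - Λ = -(u + Λ) by ring, zpow_neg, even_two.neg_zpow, div_eq_mul_inv]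
    norm_cast
  have h2Λ : (Λ + Λ) ^ 2 ≠ 0 := by simp [← two_mul, hΛ]
  rw [hquot]
  refine ((hasDerivAt_pow 3 Λ).fun_div (((hasDerivAt_id' Λ).add_const Λ).fun_pow 2)
    h2Λ).congr_deriv ?_
  field_simp
  ring

theorem cube_mul_neg_sub_zpow_eq_eval (Λ : ℂ) (k : ℕ) :
    (fun u : ℂ => u ^ 3 * (-u - Λ) ^ (2 * ((k + 1 : ℕ) : ℤ) - 2)) =
      fun u => (X ^ 3 * (X + C Λ) ^ (2 * k) : ℂ[X]).eval u := by
  funext u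
  rw [show 2 * ((k + 1 : ℕ) : ℤ) - 2 = ((2 * k : ℕ) : ℤ) by push_cast; ring, zpow_natCast,
    show -u - Λ = -(u + Λ) by ring, (even_two_mul k).neg_pow]
  simp

theorem natDegree_X_pow_three_mul_X_add_C_pow {R : Type*} [Semiring R] [Nontrivial R] (a : R)
    (k : ℕ) : (X ^ 3 * (X + C a) ^ (2 * k) : R[X]).natDegree = 2 * (k + 1) + 1 := by
  rw [(monic_X_pow 3).natDegree_mul ((monic_X_add_C a).pow _)]
  rw [natDegree_X_pow, natDegree_pow_X_add_C]
  ring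

theorem iteratedDeriv_cube_mul_neg_sub_zpow_of_pos (Λ : ℂ) (k : ℕ) :
    iteratedDeriv (2 * (k + 1) + 1)
      (fun u : ℂ => u ^ 3 * (-u - Λ) ^ (2 * ((k + 1 : ℕ) : ℤ) - 2)) Λ = (2 * (k + 1) + 1)! := by
  rw [cube_mul_neg_sub_zpow_eq_eval, ← natDegree_X_pow_three_mul_X_add_C_pow Λ k]
  exact ((monic_X_pow 3).mul ((monic_X_add_C Λ).pow _)).iteratedDeriv_natDegree_eval Λ

theorem stmt1 (Λ : ℂ) (hΛ : Λ ≠ 0) (c : ℕ → ℂ)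
    (hc : ∀ d : ℕ, c d = (1 / ((2*d+1)! : ℂ)) *
      iteratedDeriv (2*d+1) (fun u : ℂ => u^3 * (-u-Λ)^(2*(d:ℤ)-2)) Λ) :
    ∀ z : ℂ, ‖z‖ < 1 →
      HasSum (fun d : ℕ => z^d * c d) (1/2 + z/(1-z)) := by
  intro z hz
  refine hasSum_pow_mul_of_forall_succ_eq_one hz ?_ fun k => ?_
  · simpa [hc 0, iteratedDeriv_one] using (hasDerivAt_cube_mul_neg_sub_zpow_neg_two hΛ).deriv
  · rw [hc, iteratedDeriv_cube_mul_neg_sub_zpow_of_pos, one_div, inv_mul_cancel₀]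
    exact Nat.cast_ne_zero.mpr (Nat.factorial_ne_zero _)
end

section
/- Let λ ∈ ℂ with λ ≠ 0. For each d ∈ ℕ set c d = (1/(2d+1)!) · iteratedDeriv (2d+1) (fun u : ℂ => u^3 * (-2*u)^((2*(d:ℤ)-1)) / (2*λ)) λ, which is the residue at u = λ of u^3(-2u)^{2d-1}/(2λ(u-λ)^{2(d+1)}). Then for every z ∈ ℂ with |z| < 1/4, HasSum (fun d : ℕ => z^d * c d) (-1/(2*(1-4*z)^2)). -/
/-!
Away from `u = 0` the integrand is the monomial `-(4^d / (4Λ)) u^(2d+2)`, so its residue at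
`u = Λ` is `-(4^d / (4Λ)) (2d+2) Λ = -(d+1) 4^d / 2`, independently of `Λ`. The generating
series is then `-(1/2) ∑ (d+1) (4z)^d = -1 / (2 (1-4z)^2)`.
-/

open scoped Nat
open Topology

theorem iteratedDeriv_pow_succ_self {𝕜 : Type*} [NontriviallyNormedField 𝕜] (n : ℕ) (x : 𝕜) :
    iteratedDeriv n (· ^ (n + 1)) x = (n + 1)! * x := by
  have h := Nat.factorial_mul_descFactorial (Nat.le_succ n)
  rw [Nat.succ_sub (le_refl n), Nat.sub_self, Nat.factorial_one, one_mul] at h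
  simp [h]

theorem mul_neg_two_mul_zpow_two_mul_sub_one {K : Type*} [Field K] [NeZero (2 : K)]
    (Λ u : K) (hu : u ≠ 0) (d : ℕ) :
    u ^ 3 * (-2 * u) ^ (2 * (d : ℤ) - 1) / (2 * Λ) = -(4 ^ d / (4 * Λ)) * u ^ (2 * d + 2) := by
  have h2u : -2 * u ≠ 0 := mul_ne_zero (neg_ne_zero.2 two_ne_zero) hu
  have h4 : (4 : K) ≠ 0 := by
    rw [show (4 : K) = 2 * 2 by norm_num]
    exact mul_ne_zero two_ne_zero two_ne_zero
  rw [zpow_sub_one₀ h2u, zpow_mul, zpow_ofNat, zpow_natCast, pow_add, pow_mul]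
  field_simp
  ring

theorem residue_coeff_eq {𝕜 : Type*} [NontriviallyNormedField 𝕜] [CharZero 𝕜]
    (Λ : 𝕜) (hΛ : Λ ≠ 0) (d : ℕ) :
    (1 / ((2 * d + 1)! : 𝕜)) *
        iteratedDeriv (2 * d + 1) (fun u : 𝕜 => u ^ 3 * (-2 * u) ^ (2 * (d : ℤ) - 1) / (2 * Λ)) Λ =
      -((d + 1) * 4 ^ d) / 2 := by
  have hmonomial : (fun u : 𝕜 => u ^ 3 * (-2 * u) ^ (2 * (d : ℤ) - 1) / (2 * Λ))
      =ᶠ[𝓝 Λ] fun u => -(4 ^ d / (4 * Λ)) * u ^ (2 * d + 1 + 1) :=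
    (eventually_ne_nhds hΛ).mono fun u hu => mul_neg_two_mul_zpow_two_mul_sub_one Λ u hu d
  rw [hmonomial.iteratedDeriv_eq, iteratedDeriv_const_mul_field, iteratedDeriv_pow_succ_self,
    Nat.factorial_succ (2 * d + 1)]
  have hfact : ((2 * d + 1)! : 𝕜) ≠ 0 := Nat.cast_ne_zero.2 (Nat.factorial_ne_zero _)
  push_cast
  field_simp
  ring

theorem stmt2 (Λ : ℂ) (hΛ : Λ ≠ 0) (c : ℕ → ℂ)
    (hc : ∀ d : ℕ, c d = (1 / ((2*d+1)! : ℂ)) *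
      iteratedDeriv (2*d+1) (fun u : ℂ => u^3 * (-2*u)^(2*(d:ℤ)-1) / (2*Λ)) Λ) :
    ∀ z : ℂ, ‖z‖ < 1/4 →
      HasSum (fun d : ℕ => z^d * c d) (-1/(2*(1-4*z)^2)) := by
  intro z hz
  have h4z : ‖4 * z‖ < 1 := by
    rw [norm_mul, RCLike.norm_ofNat]
    linarith
  have hterm (d : ℕ) : z ^ d * c d = -1 / 2 * ((d + 1).choose 1 * (4 * z) ^ d) := by
    rw [hc, residue_coeff_eq Λ hΛ, Nat.choose_one_right, mul_pow]
    push_cast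
    ring
  rw [funext hterm, show -1 / (2 * (1 - 4 * z) ^ 2) = -1 / 2 * (1 / (1 - 4 * z) ^ (1 + 1)) by
    rw [div_mul_div_comm, mul_one]]
  exact (hasSum_choose_mul_geometric_of_norm_lt_one 1 h4z).mul_left _
end

section
/- For every real z with |z| < 1/4, HasSum (fun d : ℕ => (((2*d+1)! : ℝ) / (((d+1)! : ℝ))^2) * z^(d+1)) (-Real.log ((1 + Real.sqrt (1 - 4*z)) / 2)). Equivalently, the mirror map of O(0)⊕O(-2)→P^1, log q = log z + 2·∑_{d≥1} ((2d-1)!/(d!)^2) z^d, equals log z - 2 log((1+√(1-4z))/2). -/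
/-!
Since `(2d+1)!/((d+1)!)² = C(2d+2, d+1)/(2(d+1))`, the series is the termwise antiderivative,
vanishing at `0`, of `G(z) = ∑ C(2n+2, n+1)/2 · zⁿ = (1/√(1-4z) - 1)/(2z)`, where
`∑ C(2n, n) zⁿ = (1-4z)^(-1/2)` is the binomial series. The function `-log((1+√(1-4z))/2)` also
vanishes at `0`, and its derivative `2/(√(1-4z)(1+√(1-4z)))` equals `G(z)`, so the two functions
agree on `(-1/4, 1/4)`.
-/

open scoped Nat
open Set

theorem factorial_two_mul_add_one_div_sq (d : ℕ) :
    ((2 * d + 1)! : ℝ) / ((d + 1)! : ℝ) ^ 2 = (d + 1).centralBinom / 2 / (d + 1) := by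
  have h : (2 * (d + 1))! = (2 * d + 2) * (2 * d + 1)! := Nat.factorial_succ _
  rw [Nat.centralBinom_eq_two_mul_choose, Nat.cast_choose ℝ (by omega),
    show 2 * (d + 1) - (d + 1) = d + 1 by omega, h]
  push_cast
  field_simp

theorem ascPochhammer_eval_half_mul_four_pow (n : ℕ) :
    (ascPochhammer ℝ n).eval (1 / 2) * 4 ^ n = n ! * n.centralBinom := by
  induction n with
  | zero => simp
  | succ n ih =>
    have h : ((n : ℝ) + 1) * (n + 1).centralBinom = 2 * (2 * n + 1) * n.centralBinom := by
      exact_mod_cast Nat.succ_mul_centralBinom_succ n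
    rw [ascPochhammer_succ_eval, Nat.factorial_succ]
    push_cast
    linear_combination (2 * (2 * n + 1) : ℝ) * ih - (n ! : ℝ) * h

theorem Ring.choose_half_add_sub_one_mul_four_pow (n : ℕ) :
    Ring.choose ((1 / 2 : ℝ) + n - 1) n * 4 ^ n = n.centralBinom := by
  rw [Ring.choose_eq_smul, Polynomial.descPochhammer_smeval_eq_ascPochhammer,
    Polynomial.ascPochhammer_smeval_eq_eval, smul_eq_mul, mul_assoc,
    show (1 / 2 : ℝ) + n - 1 - n + 1 = 1 / 2 by ring, ascPochhammer_eval_half_mul_four_pow,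
    inv_mul_cancel_left₀ (by positivity)]

theorem hasSum_centralBinom_mul_pow {x : ℝ} (hx : |x| < 1 / 4) :
    HasSum (fun n ↦ (n.centralBinom : ℝ) * x ^ n) (1 / √(1 - 4 * x)) := by
  have h4x : 4 * x ∈ Metric.eball (0 : ℝ) 1 := by
    rw [Metric.mem_eball, edist_zero_right, ← ofReal_norm, ENNReal.ofReal_lt_one,
      Real.norm_eq_abs, abs_mul]
    norm_num; linarith
  have := (Real.one_div_one_sub_rpow_hasFPowerSeriesOnBall_zero (1 / 2)).hasSum h4x
  simp only [FormalMultilinearSeries.ofScalars_apply_eq, zero_add, smul_eq_mul, mul_pow,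
    ← mul_assoc, Ring.choose_half_add_sub_one_mul_four_pow] at this
  rwa [Real.sqrt_eq_rpow]

section TermwiseIntegration

variable {𝕜 : Type*} [RCLike 𝕜] {b : ℕ → 𝕜} {R : ℝ} {x : 𝕜}

theorem hasDerivAt_div_succ_mul_pow_succ (c : 𝕜) (n : ℕ) (x : 𝕜) :
    HasDerivAt (fun y ↦ c / (n + 1) * y ^ (n + 1)) (c * x ^ n) x := by
  refine ((hasDerivAt_pow (n + 1) x).const_mul (c / (n + 1))).congr_deriv ?_
  push_cast
  field_simp

theorem norm_mul_pow_le_of_mem_ball (n : ℕ) {y : 𝕜} (hy : y ∈ Metric.ball 0 R) :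
    ‖b n * y ^ n‖ ≤ ‖b n‖ * R ^ n := by
  rw [norm_mul, norm_pow]
  gcongr
  exact (mem_ball_zero_iff.mp hy).le

theorem summable_div_succ_mul_pow_succ (hb : Summable fun n ↦ ‖b n‖ * R ^ n) (hx : ‖x‖ < R) :
    Summable fun n ↦ b n / (n + 1) * x ^ (n + 1) :=
  summable_of_summable_hasDerivAt_of_isPreconnected (g := fun n y ↦ b n / (n + 1) * y ^ (n + 1))
    hb Metric.isOpen_ball (convex_ball 0 R).isPreconnected
    (fun n y _ ↦ hasDerivAt_div_succ_mul_pow_succ (b n) n y)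
    (fun n _ hy ↦ norm_mul_pow_le_of_mem_ball n hy) (y₀ := 0)
    (Metric.mem_ball_self ((norm_nonneg x).trans_lt hx)) (by simp) (mem_ball_zero_iff.mpr hx)

theorem hasDerivAt_tsum_div_succ_mul_pow_succ (hb : Summable fun n ↦ ‖b n‖ * R ^ n)
    (hx : ‖x‖ < R) :
    HasDerivAt (fun y ↦ ∑' n, b n / (n + 1) * y ^ (n + 1)) (∑' n, b n * x ^ n) x :=
  hasDerivAt_tsum_of_isPreconnected (g := fun n y ↦ b n / (n + 1) * y ^ (n + 1))
    hb Metric.isOpen_ball (convex_ball 0 R).isPreconnected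
    (fun n y _ ↦ hasDerivAt_div_succ_mul_pow_succ (b n) n y)
    (fun n _ hy ↦ norm_mul_pow_le_of_mem_ball n hy) (y₀ := 0)
    (Metric.mem_ball_self ((norm_nonneg x).trans_lt hx)) (by simp) (mem_ball_zero_iff.mpr hx)

end TermwiseIntegration

theorem exists_gt_abs_summable_centralBinom_succ {y : ℝ} (hy : |y| < 1 / 4) :
    ∃ R, |y| < R ∧ Summable fun n ↦ ‖((n + 1).centralBinom : ℝ) / 2‖ * R ^ n := by
  obtain ⟨R, hyR, hR⟩ := exists_between hy
  have hR0 : 0 ≤ R := (abs_nonneg y).trans hyR.le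
  refine ⟨R, hyR, .of_nonneg_of_le (fun n ↦ by positivity) (fun n ↦ ?_)
    ((summable_geometric_of_lt_one (by positivity) (by linarith : 4 * R < 1)).mul_left 2)⟩
  have h4 : ((n + 1).centralBinom : ℝ) ≤ 4 * 4 ^ n := by
    rw [← pow_succ']; exact_mod_cast Nat.centralBinom_le_four_pow _
  rw [Real.norm_of_nonneg (by positivity), mul_pow]
  nlinarith [pow_nonneg hR0 n, pow_nonneg (by norm_num : (0 : ℝ) ≤ 4) n]

theorem hasDerivAt_neg_log_one_add_sqrt_one_sub_four_mul_div_two {x : ℝ} (hx : 4 * x < 1) :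
    HasDerivAt (fun y ↦ -Real.log ((1 + √(1 - 4 * y)) / 2))
      (2 / (√(1 - 4 * x) * (1 + √(1 - 4 * x)))) x := by
  have hs : 0 < √(1 - 4 * x) := Real.sqrt_pos.mpr (by linarith)
  have h := (((((hasDerivAt_id' x).const_mul 4).const_sub 1).sqrt (by linarith)).const_add 1
    |>.div_const 2).log (by positivity) |>.neg
  refine h.congr_deriv ?_
  field_simp
  ring

theorem hasSum_centralBinom_succ_div_two_mul_pow {x : ℝ} (hx : |x| < 1 / 4) :
    HasSum (fun n ↦ ((n + 1).centralBinom : ℝ) / 2 * x ^ n)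
      (2 / (√(1 - 4 * x) * (1 + √(1 - 4 * x)))) := by
  rcases eq_or_ne x 0 with rfl | hx0
  · convert hasSum_single (f := fun n ↦ ((n + 1).centralBinom : ℝ) / 2 * 0 ^ n) 0
      (fun n hn ↦ by simp [hn]) using 1
    norm_num [Nat.centralBinom]
  have h4x : 0 < 1 - 4 * x := by linarith [(abs_lt.mp hx).2]
  have hs : 0 < √(1 - 4 * x) := Real.sqrt_pos.mpr h4x
  have hss : √(1 - 4 * x) ^ 2 = 1 - 4 * x := Real.sq_sqrt h4x.le
  have htail := ((hasSum_nat_add_iff' 1).mpr (hasSum_centralBinom_mul_pow hx)).mul_left (2 * x)⁻¹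
  have hterm : (fun n ↦ ((n + 1).centralBinom : ℝ) / 2 * x ^ n) =
      fun n ↦ (2 * x)⁻¹ * ((n + 1).centralBinom * x ^ (n + 1)) := by
    ext n
    field_simp
    ring
  -- `(1/s - 1)/(2x) = 2/(s(1+s))` for `s = √(1-4x)`, because `1 - s² = 4x`
  have hsum : 2 / (√(1 - 4 * x) * (1 + √(1 - 4 * x))) =
      (2 * x)⁻¹ * (1 / √(1 - 4 * x) - ∑ i ∈ Finset.range 1, (i.centralBinom : ℝ) * x ^ i) := by
    simp only [Finset.range_one, Finset.sum_singleton, Nat.centralBinom_zero, pow_zero]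
    field_simp
    linear_combination hss
  rwa [hterm, hsum]

theorem stmt3 : ∀ z : ℝ, |z| < 1/4 →
    HasSum (fun d : ℕ => (((2*d+1)! : ℝ) / (((d+1)! : ℝ))^2) * z^(d+1))
      (-Real.log ((1 + Real.sqrt (1 - 4*z)) / 2)) := by
  intro z hz
  simp_rw [factorial_two_mul_add_one_div_sq]
  set b : ℕ → ℝ := fun n ↦ (n + 1).centralBinom / 2
  set F : ℝ → ℝ := fun y ↦ ∑' n, b n / (n + 1) * y ^ (n + 1)
  set L : ℝ → ℝ := fun y ↦ -Real.log ((1 + √(1 - 4 * y)) / 2)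
  have hderiv : ∀ y ∈ Ioo (-(1 / 4)) (1 / 4 : ℝ),
      HasDerivAt F (∑' n, b n * y ^ n) y ∧ HasDerivAt L (∑' n, b n * y ^ n) y := by
    intro y hy
    have hy' : |y| < 1 / 4 := abs_lt.mpr hy
    obtain ⟨R, hyR, hb⟩ := exists_gt_abs_summable_centralBinom_succ hy'
    refine ⟨hasDerivAt_tsum_div_succ_mul_pow_succ hb hyR, ?_⟩
    rw [(hasSum_centralBinom_succ_div_two_mul_pow hy').tsum_eq]
    exact hasDerivAt_neg_log_one_add_sqrt_one_sub_four_mul_div_two (by linarith [hy.2])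
  have hFL : EqOn F L (Ioo (-(1 / 4)) (1 / 4)) :=
    isOpen_Ioo.eqOn_of_deriv_eq isPreconnected_Ioo
      (fun y hy ↦ (hderiv y hy).1.differentiableAt.differentiableWithinAt)
      (fun y hy ↦ (hderiv y hy).2.differentiableAt.differentiableWithinAt)
      (fun y hy ↦ (hderiv y hy).1.deriv.trans (hderiv y hy).2.deriv.symm)
      (by norm_num : (0 : ℝ) ∈ Ioo (-(1 / 4)) (1 / 4)) (by simp [F, L])
  obtain ⟨R, hzR, hb⟩ := exists_gt_abs_summable_centralBinom_succ hz
  have hF : HasSum (fun n ↦ b n / (n + 1) * z ^ (n + 1)) (F z) :=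
    (summable_div_succ_mul_pow_succ hb hzR).hasSum
  rwa [hFL (abs_lt.mp hz)] at hF
end

section
/- Let λ ∈ ℂ with λ ≠ 0. For each d ∈ ℕ set c d = (1/(3d+2)!) · iteratedDeriv (3d+2) (fun u : ℂ => u^3 * (-3*u)^((3*(d:ℤ)-1)) ) λ, which is the residue at u = λ of u^3(-3u)^{3d-1}/(u-λ)^{3(d+1)}. Then for every z ∈ ℂ with |z| < 1/27, HasSum (fun d : ℕ => z^d * c d) (-1/(3*(1+27*z))). -/
open scoped Nat
open Filter Topology

/-!
Near `Λ ≠ 0` the integrand `u ^ 3 * (-3 * u) ^ (3 * d - 1)` is the monomial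
`(-3) ^ (3 * d - 1) * u ^ (3 * d + 2)`, whose `(3 * d + 2)`-th derivative divided by `(3 * d + 2)!`
is its leading coefficient `(-27) ^ d * (-1 / 3)`. The series is then geometric in `-27 * z`.
-/

theorem iteratedDeriv_const_mul_pow_self {𝕜 : Type*} [NontriviallyNormedField 𝕜] (a x : 𝕜)
    (n : ℕ) : iteratedDeriv n (fun u => a * u ^ n) x = a * n ! := by
  rw [iteratedDeriv_const_mul_field, iteratedDeriv_pow, Nat.descFactorial_self, Nat.sub_self,
    pow_zero, mul_one]

theorem eventuallyEq_pow_mul_const_mul_zpow {𝕜 : Type*} [NontriviallyNormedField 𝕜] {x : 𝕜}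
    (hx : x ≠ 0) (a : 𝕜) {k n : ℕ} {m : ℤ} (hkmn : (k : ℤ) + m = n) :
    (fun u => u ^ k * (a * u) ^ m) =ᶠ[𝓝 x] fun u => a ^ m * u ^ n := by
  filter_upwards [eventually_ne_nhds hx] with u hu
  rw [mul_zpow, mul_left_comm, ← zpow_natCast u k, ← zpow_add₀ hu, hkmn, zpow_natCast]

theorem neg_three_zpow_three_mul_sub_one (d : ℕ) :
    (-3 : ℂ) ^ (3 * (d : ℤ) - 1) = (-27) ^ d * (-1 / 3) := by
  rw [sub_eq_add_neg, zpow_add₀ (by norm_num), zpow_mul, zpow_natCast, zpow_neg_one]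
  norm_num

theorem residue_local_P2_integrand {Λ : ℂ} (hΛ : Λ ≠ 0) (d : ℕ) :
    (1 / ((3 * d + 2)! : ℂ)) *
      iteratedDeriv (3 * d + 2) (fun u : ℂ => u ^ 3 * (-3 * u) ^ (3 * (d : ℤ) - 1)) Λ =
      (-27) ^ d * (-1 / 3) := by
  have hexp : ((3 : ℕ) : ℤ) + (3 * (d : ℤ) - 1) = ((3 * d + 2 : ℕ) : ℤ) := by push_cast; ring
  rw [(eventuallyEq_pow_mul_const_mul_zpow hΛ (-3) hexp).iteratedDeriv_eq,
    iteratedDeriv_const_mul_pow_self, neg_three_zpow_three_mul_sub_one]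
  have hfac : ((3 * d + 2)! : ℂ) ≠ 0 := by exact_mod_cast Nat.factorial_ne_zero _
  field_simp

theorem hasSum_geometric_neg_twentyseven {z : ℂ} (hz : ‖z‖ < 1 / 27) :
    HasSum (fun d : ℕ => z ^ d * ((-27) ^ d * (-1 / 3))) (-1 / (3 * (1 + 27 * z))) := by
  have hnorm : ‖-27 * z‖ < 1 := by
    rw [norm_mul, norm_neg]
    norm_num
    linarith
  have hgeom := (hasSum_geometric_of_norm_lt_one hnorm).mul_right (-1 / 3)
  rw [show (1 - -27 * z)⁻¹ * (-1 / 3) = -1 / (3 * (1 + 27 * z)) by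
    rw [mul_comm 3, ← div_div]; ring] at hgeom
  exact hgeom.congr_fun fun d => by rw [mul_pow]; ring

theorem stmt5 (Λ : ℂ) (hΛ : Λ ≠ 0) (c : ℕ → ℂ)
    (hc : ∀ d : ℕ, c d = (1 / ((3*d+2)! : ℂ)) *
      iteratedDeriv (3*d+2) (fun u : ℂ => u^3 * (-3*u)^(3*(d:ℤ)-1)) Λ) :
    ∀ z : ℂ, ‖z‖ < 1/27 →
      HasSum (fun d : ℕ => z^d * c d) (-1/(3*(1+27*z))) := by
  intro z hz
  simp only [hc, residue_local_P2_integrand hΛ]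
  exact hasSum_geometric_neg_twentyseven hz
end

section
/- Let λ ∈ ℂ with λ ≠ 0. For d1, d2 ∈ ℕ define c d1 d2 = (1/((2d1+1)!·(2d2+1)!)) · iteratedDeriv (2d2+1) (fun u2 : ℂ => iteratedDeriv (2d1+1) (fun u1 : ℂ => u1^2 * u2 * (-2*u1 - 2*u2)^((2*(d1:ℤ)+2*(d2:ℤ)-1)) ) λ) λ, the iterated residue at (u1,u2)=(λ,λ) of u1^2u2(-2u1-2u2)^{2d1+2d2-1}/((u1-λ)^{2(d1+1)}(u2-λ)^{2(d2+1)}). Then for all z1, z2 ∈ ℂ with |z1| < 1/100 and |z2| < 1/100, HasSum (fun p : ℕ × ℕ => z1^p.1 * z2^p.2 * c p.1 p.2) ((16*z1^2 - (1-4*z2)^2) / (4*((1-8*(z1+z2)+16*(z1-z2)^2)))). -/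
/-!
For `d1 + d2 ≥ 1` the exponent `n = 2 d1 + 2 d2 - 1` is a natural number and the integrand
`u1^2 u2 (-2 u1 - 2 u2)^n` is a homogeneous polynomial of degree `(2 d1 + 1) + (2 d2 + 1)`, so the
mixed derivative of that order is a constant: `(2 d1 + 1)! (2 d2 + 1)!` times the coefficient of
`u1^(2 d1 + 1) u2^(2 d2 + 1)`, whatever the point `Λ`. Hence `c (e+1) d = (-2)^n * C(n, 2e+1)` and
`c 0 (d+1) = 0`, while `c 0 0 = -1/4` is a direct computation.

Writing `4 z2 = t^2`, the sum over `d2` is the even part of `∑ C(m+k, k) t^m`, namely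
`((1-t)^(-k-1) + (1+t)^(-k-1)) / 2`; the remaining sum over `d1` is geometric and gives
`1/((1-t)^2 - 4 z1) + 1/((1+t)^2 - 4 z1)`. The product of these two denominators is the
discriminant `1 - 8(z1+z2) + 16(z1-z2)^2`.
-/

open scoped Nat
open Finset Filter Topology

section MixedDerivative

variable {𝕜 : Type*} [NontriviallyNormedField 𝕜] {ι : Type*}

lemma iteratedDeriv_sum_mul_pow (s : Finset ι) (A : ι → 𝕜) (g : ι → ℕ) (n : ℕ) (x : 𝕜) :
    iteratedDeriv n (fun x => ∑ i ∈ s, A i * x ^ g i) x =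
      ∑ i ∈ s, A i * ((g i).descFactorial n * x ^ (g i - n)) := by
  rw [iteratedDeriv_fun_sum fun i _ => by fun_prop]
  simp

lemma descFactorial_mul_pow_mul_descFactorial_mul_pow_of_add_eq {g h a b : ℕ}
    (hgh : g + h = a + b) (p q : 𝕜) :
    (g.descFactorial a * p ^ (g - a)) * (h.descFactorial b * q ^ (h - b)) =
      if g = a then (a ! * b ! : 𝕜) else 0 := by
  rcases lt_trichotomy g a with hlt | rfl | hgt
  · simp [Nat.descFactorial_eq_zero_iff_lt.2 hlt, hlt.ne]
  · obtain rfl : h = b := by omega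
    simp [Nat.descFactorial_self]
  · simp [Nat.descFactorial_eq_zero_iff_lt.2 (by omega : h < b), hgt.ne']

lemma iteratedDeriv_iteratedDeriv_sum_mul_pow_mul_pow (s : Finset ι) (A : ι → 𝕜)
    (g h : ι → ℕ) {a b : ℕ} (hgh : ∀ i ∈ s, g i + h i = a + b) (p q : 𝕜) :
    iteratedDeriv b (fun y => iteratedDeriv a (fun x => ∑ i ∈ s, A i * x ^ g i * y ^ h i) p) q =
      a ! * b ! * ∑ i ∈ s with g i = a, A i := by
  have inner (y : 𝕜) : iteratedDeriv a (fun x => ∑ i ∈ s, A i * x ^ g i * y ^ h i) p =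
      ∑ i ∈ s, A i * ((g i).descFactorial a * p ^ (g i - a)) * y ^ h i := by
    simp_rw [mul_right_comm _ _ (y ^ _), iteratedDeriv_sum_mul_pow]
  simp_rw [inner, iteratedDeriv_sum_mul_pow, sum_filter, mul_sum]
  refine sum_congr rfl fun i hi => ?_
  rw [mul_assoc, descFactorial_mul_pow_mul_descFactorial_mul_pow_of_add_eq (hgh i hi)]
  split_ifs <;> ring

end MixedDerivative

lemma sq_mul_mul_neg_two_mul_sub_pow_eq_sum {R : Type*} [CommRing R] (x y : R) (n : ℕ) :
    x ^ 2 * y * (-2 * x - 2 * y) ^ n =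
      ∑ j ∈ range (n + 1), ((-2) ^ n * n.choose j : R) * x ^ (j + 2) * y ^ (n - j + 1) := by
  rw [show -2 * x - 2 * y = -2 * (x + y) by ring, mul_pow, add_pow, mul_sum, mul_sum]
  exact sum_congr rfl fun j _ => by ring

lemma iteratedDeriv_iteratedDeriv_sq_mul_mul_neg_two_mul_sub_pow {𝕜 : Type*}
    [NontriviallyNormedField 𝕜] {n a b : ℕ} (hab : a + b = n + 3) (p q : 𝕜) :
    iteratedDeriv b
        (fun u2 => iteratedDeriv a (fun u1 => u1 ^ 2 * u2 * (-2 * u1 - 2 * u2) ^ n) p) q =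
      a ! * b ! * ∑ j ∈ range (n + 1) with j + 2 = a, ((-2) ^ n * n.choose j : 𝕜) := by
  simp_rw [sq_mul_mul_neg_two_mul_sub_pow_eq_sum]
  exact iteratedDeriv_iteratedDeriv_sum_mul_pow_mul_pow _ _ _ _
    (fun j hj => by simp only [mem_range] at hj; omega) p q

noncomputable def yukawaCoeff (Λ : ℂ) (d1 d2 : ℕ) : ℂ :=
  (1 / (((2 * d1 + 1)! : ℂ) * ((2 * d2 + 1)! : ℂ))) *
    iteratedDeriv (2 * d2 + 1) (fun u2 : ℂ =>
      iteratedDeriv (2 * d1 + 1) (fun u1 : ℂ =>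
        u1 ^ 2 * u2 * ((-2 * u1 - 2 * u2) ^ (2 * (d1 : ℤ) + 2 * (d2 : ℤ) - 1))) Λ) Λ

lemma yukawaCoeff_eq_sum_of_exponent_eq (Λ : ℂ) {d1 d2 n : ℕ}
    (hn : 2 * (d1 : ℤ) + 2 * d2 - 1 = n) :
    yukawaCoeff Λ d1 d2 =
      ∑ j ∈ range (n + 1) with j + 2 = 2 * d1 + 1, ((-2) ^ n * n.choose j : ℂ) := by
  simp only [yukawaCoeff, hn, zpow_natCast]
  have hfact : ((2 * d1 + 1)! * (2 * d2 + 1)! : ℂ) ≠ 0 := by simp [Nat.factorial_ne_zero]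
  rw [iteratedDeriv_iteratedDeriv_sq_mul_mul_neg_two_mul_sub_pow (by omega), ← mul_assoc,
    one_div_mul_cancel hfact, one_mul]

lemma yukawaCoeff_succ_left (Λ : ℂ) (e d : ℕ) :
    yukawaCoeff Λ (e + 1) d =
      (-2) ^ (2 * e + 2 * d + 1) * (2 * e + 2 * d + 1).choose (2 * e + 1) := by
  rw [yukawaCoeff_eq_sum_of_exponent_eq Λ (n := 2 * e + 2 * d + 1) (by push_cast; ring),
    show {j ∈ range (2 * e + 2 * d + 1 + 1) | j + 2 = 2 * (e + 1) + 1} = {2 * e + 1} by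
      ext j; simp only [mem_filter, mem_range, mem_singleton]; omega,
    sum_singleton]

lemma yukawaCoeff_zero_succ (Λ : ℂ) (d : ℕ) : yukawaCoeff Λ 0 (d + 1) = 0 := by
  rw [yukawaCoeff_eq_sum_of_exponent_eq Λ (n := 2 * d + 1) (by push_cast; ring)]
  exact sum_eq_zero fun j hj => absurd (mem_filter.1 hj).2 (by omega)

lemma hasDerivAt_yukawa_inner {u2 : ℂ} (Λ : ℂ) (h : Λ + u2 ≠ 0) :
    HasDerivAt (fun u1 : ℂ => u1 ^ 2 * u2 * (-2 * u1 - 2 * u2) ^ (-1 : ℤ))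
      (-(Λ * u2 * (Λ + 2 * u2)) / (2 * (Λ + u2) ^ 2)) Λ := by
  have hd : -2 * Λ - 2 * u2 ≠ 0 := fun h0 => h (by linear_combination (-1 / 2 : ℂ) * h0)
  simp_rw [zpow_neg_one]
  refine (((hasDerivAt_pow 2 Λ).mul_const u2).fun_mul
    ((((hasDerivAt_id' Λ).const_mul (-2)).sub_const (2 * u2)).fun_inv hd)).congr_deriv ?_
  rw [show -2 * Λ - 2 * u2 = -2 * (Λ + u2) by ring]
  field_simp
  ring

lemma hasDerivAt_yukawa_outer {Λ : ℂ} (hΛ : Λ ≠ 0) :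
    HasDerivAt (fun u2 : ℂ => -(Λ * u2 * (Λ + 2 * u2)) / (2 * (Λ + u2) ^ 2)) (-1 / 4) Λ := by
  have hd : 2 * (Λ + Λ) ^ 2 ≠ 0 := by simp [← two_mul, hΛ]
  refine ((((hasDerivAt_id' Λ).const_mul Λ).fun_mul
    (((hasDerivAt_id' Λ).const_mul 2).const_add Λ)).fun_neg.fun_div
    ((((hasDerivAt_id' Λ).const_add Λ).fun_pow 2).const_mul 2) hd).congr_deriv ?_
  field_simp
  ring

lemma yukawaCoeff_zero_zero {Λ : ℂ} (hΛ : Λ ≠ 0) : yukawaCoeff Λ 0 0 = -1 / 4 := by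
  have inner : (fun u2 =>
      iteratedDeriv 1 (fun u1 : ℂ => u1 ^ 2 * u2 * (-2 * u1 - 2 * u2) ^ (-1 : ℤ)) Λ)
      =ᶠ[𝓝 Λ] fun u2 => -(Λ * u2 * (Λ + 2 * u2)) / (2 * (Λ + u2) ^ 2) := by
    have hcont : ContinuousAt (fun u2 => Λ + u2) Λ := by fun_prop
    filter_upwards [hcont.eventually_ne (by simpa [← two_mul] : Λ + Λ ≠ 0)] with u2 hu2
    rw [iteratedDeriv_one, (hasDerivAt_yukawa_inner Λ hu2).deriv]
  simp only [yukawaCoeff, Nat.mul_zero, Nat.zero_add, Nat.factorial_one, Nat.cast_one, mul_one,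
    div_one, one_mul, show 2 * ((0 : ℕ) : ℤ) + 2 * ((0 : ℕ) : ℤ) - 1 = -1 by norm_num]
  rw [iteratedDeriv_one, inner.deriv_eq, (hasDerivAt_yukawa_outer hΛ).deriv]

lemma hasSum_prod_of_hasSum_succ_fst {M : Type*} [AddCommMonoid M] [TopologicalSpace M]
    [ContinuousAdd M] {f : ℕ × ℕ → M} {a b : M} (h00 : f (0, 0) = b)
    (h0 : ∀ d, f (0, d + 1) = 0) (h : HasSum (fun p : ℕ × ℕ => f (p.1 + 1, p.2)) a) :
    HasSum f (b + a) := by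
  have hfirst : HasSum (fun p : ℕ × ℕ => if p.1 = 0 then f p else 0) b := by
    rw [← h00]
    convert hasSum_single (0, 0) fun p hp => ?_ using 1
    · simp
    · obtain ⟨_ | d1, _ | d2⟩ := p <;> simp_all
  have hrest : HasSum (fun p : ℕ × ℕ => if p.1 = 0 then 0 else f p) a := by
    have hinj : Function.Injective fun p : ℕ × ℕ => (p.1 + 1, p.2) := by
      intro p q hpq
      simp_all [Prod.ext_iff]
    refine (hinj.hasSum_iff fun p hp => ?_).1 (by simpa [Function.comp_def] using h)
    obtain ⟨_ | d1, d2⟩ := p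
    · simp
    · exact absurd ⟨(d1, d2), rfl⟩ hp
  convert hfirst.add hrest using 1
  funext p
  split_ifs <;> simp

section Series

variable {𝕜 : Type*} [NormedField 𝕜]

lemma hasSum_two_mul_choose_two_mul_add_mul_sq_pow (k : ℕ) {t : 𝕜} (ht : ‖t‖ < 1) :
    HasSum (fun d : ℕ => 2 * (2 * d + k).choose k * (t ^ 2) ^ d)
      (1 / (1 - t) ^ (k + 1) + 1 / (1 + t) ^ (k + 1)) := by
  have hsum := (hasSum_choose_mul_geometric_of_norm_lt_one k ht).add
    (hasSum_choose_mul_geometric_of_norm_lt_one k (r := -t) (by rwa [norm_neg]))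
  rw [sub_neg_eq_add] at hsum
  have hodd (n : ℕ) (hn : n ∉ Set.range (2 * ·)) :
      ((n + k).choose k * t ^ n + (n + k).choose k * (-t) ^ n : 𝕜) = 0 := by
    have : Odd n := Nat.not_even_iff_odd.1 fun ⟨m, hm⟩ => hn ⟨m, by dsimp only; omega⟩
    rw [this.neg_pow]
    ring
  have heven := (mul_right_injective₀ two_ne_zero).hasSum_iff hodd |>.2 hsum
  have hterm :
      (fun n : ℕ => ((n + k).choose k * t ^ n + (n + k).choose k * (-t) ^ n : 𝕜)) ∘ (2 * ·) =
        fun d => 2 * (2 * d + k).choose k * (t ^ 2) ^ d := by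
    funext d
    simp only [Function.comp_apply, (even_two_mul d).neg_pow, pow_mul]
    ring
  rwa [hterm] at heven

lemma sq_sub_ne_zero_of_norm_lt {w s : 𝕜} (h : ‖w‖ < ‖s‖ ^ 2) : s ^ 2 - w ≠ 0 := by
  rintro h0
  rw [← sub_eq_zero.1 h0, norm_pow, lt_self_iff_false] at h
  exact h

lemma hasSum_pow_mul_one_div_pow_two_mul {w s : 𝕜} (h : ‖w‖ < ‖s‖ ^ 2) :
    HasSum (fun d : ℕ => w ^ d * (1 / s ^ (2 * d + 1 + 1))) (1 / (s ^ 2 - w)) := by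
  have hs : s ≠ 0 := by
    rintro rfl
    simp only [norm_zero, ne_eq, OfNat.ofNat_ne_zero, not_false_eq_true, zero_pow] at h
    linarith [norm_nonneg w]
  have hr : ‖w / s ^ 2‖ < 1 := by rwa [norm_div, norm_pow, div_lt_one (by positivity)]
  have hgeom := (hasSum_geometric_of_norm_lt_one hr).mul_right (1 / s ^ 2)
  have hterm : (fun d : ℕ => (w / s ^ 2) ^ d * (1 / s ^ 2)) =
      fun d => w ^ d * (1 / s ^ (2 * d + 1 + 1)) := by
    funext d
    rw [div_pow, ← pow_mul, pow_add]
    field_simp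
    ring
  rwa [hterm, show (1 - w / s ^ 2)⁻¹ * (1 / s ^ 2) = 1 / (s ^ 2 - w) by field_simp] at hgeom

lemma norm_lt_norm_one_sub_sq_and_norm_lt_norm_one_add_sq {w t : 𝕜} (hw : ‖w‖ < 1 / 4)
    (ht : ‖t‖ < 1 / 2) : ‖w‖ < ‖1 - t‖ ^ 2 ∧ ‖w‖ < ‖1 + t‖ ^ 2 := by
  have hm : 1 / 2 < ‖1 - t‖ := by
    have := norm_sub_norm_le (1 : 𝕜) t
    rw [norm_one] at this
    linarith
  have hp : 1 / 2 < ‖1 + t‖ := by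
    have := norm_sub_norm_le (1 : 𝕜) (-t)
    rw [norm_one, norm_neg, sub_neg_eq_add] at this
    linarith
  constructor <;> nlinarith

lemma summable_two_mul_choose_mul_pow_mul_sq_pow [CompleteSpace 𝕜] {w t : 𝕜}
    (hw : ‖w‖ < 1 / 4) (ht : ‖t‖ < 1 / 2) :
    Summable
      (fun p : ℕ × ℕ =>
        2 * (2 * p.1 + 2 * p.2 + 1).choose (2 * p.1 + 1) * w ^ p.1 * (t ^ 2) ^ p.2) := by
  have hcast (n : ℕ) : ‖(n : 𝕜)‖ ≤ n := by simpa using Nat.norm_cast_le (α := 𝕜) n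
  have hbound (p : ℕ × ℕ) :
      ‖2 * (2 * p.1 + 2 * p.2 + 1).choose (2 * p.1 + 1) * w ^ p.1 * (t ^ 2) ^ p.2‖ ≤
        4 * (4 * ‖w‖) ^ p.1 * (4 * ‖t‖ ^ 2) ^ p.2 := by
    calc _ = ‖((2 * (2 * p.1 + 2 * p.2 + 1).choose (2 * p.1 + 1) : ℕ) : 𝕜)‖ * ‖w‖ ^ p.1
          * (‖t‖ ^ 2) ^ p.2 := by
          simp only [norm_mul, norm_pow, Nat.cast_mul, Nat.cast_ofNat]
      _ ≤ 2 * 2 ^ (2 * p.1 + 2 * p.2 + 1) * ‖w‖ ^ p.1 * (‖t‖ ^ 2) ^ p.2 := by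
          gcongr
          exact (hcast _).trans
            (by exact_mod_cast Nat.mul_le_mul_left 2 (Nat.choose_le_two_pow _ _))
      _ = _ := by
          rw [pow_succ, pow_add, pow_mul, pow_mul]
          ring
  have hw4 : 4 * ‖w‖ < 1 := by linarith
  have ht4 : 4 * ‖t‖ ^ 2 < 1 := by nlinarith [norm_nonneg t]
  exact .of_norm_bounded
    (((summable_geometric_of_lt_one (by positivity) hw4).mul_left 4).mul_of_nonneg
      (summable_geometric_of_lt_one (by positivity) ht4) (fun _ => by positivity)
      (fun _ => by positivity)) hbound

lemma hasSum_two_mul_choose_mul_pow_mul_sq_pow [CompleteSpace 𝕜] {w t : 𝕜}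
    (hw : ‖w‖ < 1 / 4) (ht : ‖t‖ < 1 / 2) :
    HasSum
      (fun p : ℕ × ℕ =>
        2 * (2 * p.1 + 2 * p.2 + 1).choose (2 * p.1 + 1) * w ^ p.1 * (t ^ 2) ^ p.2)
      (1 / ((1 - t) ^ 2 - w) + 1 / ((1 + t) ^ 2 - w)) := by
  obtain ⟨hm, hp⟩ := norm_lt_norm_one_sub_sq_and_norm_lt_norm_one_add_sq hw ht
  have hrow (d1 : ℕ) : HasSum
      (fun d2 => 2 * (2 * d1 + 2 * d2 + 1).choose (2 * d1 + 1) * w ^ d1 * (t ^ 2) ^ d2)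
      (w ^ d1 * (1 / (1 - t) ^ (2 * d1 + 1 + 1)) + w ^ d1 * (1 / (1 + t) ^ (2 * d1 + 1 + 1))) := by
    have h := (hasSum_two_mul_choose_two_mul_add_mul_sq_pow (2 * d1 + 1) (t := t)
      (by linarith)).mul_left (w ^ d1)
    have hterm : (fun d2 : ℕ =>
        w ^ d1 * (2 * (2 * d2 + (2 * d1 + 1)).choose (2 * d1 + 1) * (t ^ 2) ^ d2)) =
          fun d2 => 2 * (2 * d1 + 2 * d2 + 1).choose (2 * d1 + 1) * w ^ d1 * (t ^ 2) ^ d2 := by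
      funext d2
      rw [show 2 * d2 + (2 * d1 + 1) = 2 * d1 + 2 * d2 + 1 by ring]
      ring
    rwa [hterm, mul_add] at h
  have hcol := (hasSum_pow_mul_one_div_pow_two_mul hm).add (hasSum_pow_mul_one_div_pow_two_mul hp)
  have hsum := (summable_two_mul_choose_mul_pow_mul_sq_pow hw ht).hasSum
  exact (hsum.prod_fiberwise hrow).unique hcol ▸ hsum

end Series

lemma neg_one_div_four_add_neg_mul_eq_div_discriminant {K : Type*} [Field K] [CharZero K]
    {z1 z2 t : K} (ht : t ^ 2 = 4 * z2) (hm : (1 - t) ^ 2 - 4 * z1 ≠ 0)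
    (hp : (1 + t) ^ 2 - 4 * z1 ≠ 0) :
    -1 / 4 + -z1 * (1 / ((1 - t) ^ 2 - 4 * z1) + 1 / ((1 + t) ^ 2 - 4 * z1)) =
      (16 * z1 ^ 2 - (1 - 4 * z2) ^ 2) / (4 * (1 - 8 * (z1 + z2) + 16 * (z1 - z2) ^ 2)) := by
  obtain rfl : z2 = t ^ 2 / 4 := by linear_combination -ht / 4
  rw [show 4 * (1 - 8 * (z1 + t ^ 2 / 4) + 16 * (z1 - t ^ 2 / 4) ^ 2) =
    4 * (((1 - t) ^ 2 - 4 * z1) * ((1 + t) ^ 2 - 4 * z1)) by ring]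
  field_simp
  ring

theorem stmt10 (Λ : ℂ) (hΛ : Λ ≠ 0) (c : ℕ → ℕ → ℂ)
    (hc : ∀ d1 d2 : ℕ, c d1 d2 =
      (1 / (((2*d1+1)! : ℂ) * ((2*d2+1)! : ℂ))) *
      iteratedDeriv (2*d2+1) (fun u2 : ℂ =>
        iteratedDeriv (2*d1+1) (fun u1 : ℂ =>
          u1^2 * u2 * ((-2*u1 - 2*u2)^(2*(d1:ℤ)+2*(d2:ℤ)-1))) Λ) Λ) :
    ∀ z1 z2 : ℂ, ‖z1‖ < 1/100 → ‖z2‖ < 1/100 →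
      HasSum (fun p : ℕ × ℕ => z1^p.1 * z2^p.2 * c p.1 p.2)
        ((16*z1^2 - (1-4*z2)^2) / (4*(1 - 8*(z1+z2) + 16*(z1-z2)^2))) := by
  intro z1 z2 hz1 hz2
  obtain rfl : c = yukawaCoeff Λ := funext₂ hc
  obtain ⟨t, ht⟩ := IsAlgClosed.exists_pow_nat_eq (4 * z2) two_pos
  have hw : ‖4 * z1‖ < 1 / 4 := by rw [norm_mul]; norm_num; linarith
  have ht' : ‖t‖ < 1 / 2 := by
    have : ‖t‖ ^ 2 < (1 / 2) ^ 2 := by rw [← norm_pow, ht, norm_mul]; norm_num; linarith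
    exact lt_of_pow_lt_pow_left₀ 2 (by norm_num) this
  obtain ⟨hm, hp⟩ := norm_lt_norm_one_sub_sq_and_norm_lt_norm_one_add_sq hw ht'
  rw [← neg_one_div_four_add_neg_mul_eq_div_discriminant ht (sq_sub_ne_zero_of_norm_lt hm)
    (sq_sub_ne_zero_of_norm_lt hp)]
  refine hasSum_prod_of_hasSum_succ_fst (by simp [yukawaCoeff_zero_zero hΛ])
    (fun d => by simp [yukawaCoeff_zero_succ]) ?_
  have hterm (p : ℕ × ℕ) :
      -z1 * (2 * (2 * p.1 + 2 * p.2 + 1).choose (2 * p.1 + 1) * (4 * z1) ^ p.1 * (t ^ 2) ^ p.2) =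
        z1 ^ (p.1 + 1) * z2 ^ p.2 * yukawaCoeff Λ (p.1 + 1) p.2 := by
    rw [yukawaCoeff_succ_left, ht, pow_succ (-2 : ℂ), pow_add (-2 : ℂ), pow_mul, pow_mul, neg_sq]
    ring
  simpa only [hterm] using (hasSum_two_mul_choose_mul_pow_mul_sq_pow hw ht').mul_left (-z1)
end

section
/- Let λ ∈ ℂ with λ ≠ 0. For d1, d2 ∈ ℕ define c d1 d2 = (1/((2d1+1)!·(2d2+1)!)) · iteratedDeriv (2d2+1) (fun u2 : ℂ => iteratedDeriv (2d1+1) (fun u1 : ℂ => u2^3 * (-2*u1 - 2*u2)^((2*(d1:ℤ)+2*(d2:ℤ)-1)) ) λ) λ, the iterated residue at (u1,u2)=(λ,λ) of u2^3(-2u1-2u2)^{2d1+2d2-1}/((u1-λ)^{2(d1+1)}(u2-λ)^{2(d2+1)}). Then for all z1, z2 ∈ ℂ with |z1| < 1/100 and |z2| < 1/100, HasSum (fun p : ℕ × ℕ => z1^p.1 * z2^p.2 * c p.1 p.2) (((1-4*z1)^2 - 16*z2*(1+z2)) / (4*((1-8*(z1+z2)+16*(z1-z2)^2)))). -/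
/-!
Near `(Λ, Λ)` we have `-2u₁ - 2u₂ ≠ 0` (as `Λ ≠ 0`), so both derivatives are those of integer
powers of affine functions, times polynomials. The `u₁`-derivative of order `2d₁+1` produces the
falling factorial of `2d₁+2d₂-1`, which vanishes when `d₂ = 0 < d₁`. For `d₂ = e+1` what remains
is, up to a constant, the polynomial `u³(-2u - 2Λ)^{2e}` of degree `2e+3`, whose derivative of
that order is `(2e+3)!` times its leading coefficient. Hence `c 0 0 = 1/4`, `c (d+1) 0 = 0` and
`c d (e+1) = -½·4^{d+e+1}·C(2d+2e+1, 2d+1)`.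

For the generating function of these binomials, sum over `e` first, writing `y = t²`: this is
the even part of `∑ₙ C(n+k, k) tⁿ = (1-t)^{-(k+1)}`. What is left are two geometric series in
`x`, adding up to `(1+y-x)/((1-x-y)² - 4xy)`, which is `Δ_{F₀}(z₁, z₂)` at `x = 4z₁`, `y = 4z₂`.
-/

open scoped Nat
open Finset Polynomial Topology

section

variable {𝕜 : Type*} [NontriviallyNormedField 𝕜]

theorem iteratedDeriv_affine_zpow (p q : 𝕜) (m : ℤ) (k : ℕ) {x : 𝕜}
    (hx : p * x + q ≠ 0) :
    iteratedDeriv k (fun y => (p * y + q) ^ m) x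
      = p ^ k * (descPochhammer 𝕜 k).eval (m : 𝕜) * (p * x + q) ^ (m - k) := by
  induction k generalizing x with
  | zero => simp
  | succ k ih =>
    have hU : {y : 𝕜 | p * y + q ≠ 0} ∈ 𝓝 x :=
      (isOpen_ne_fun (by fun_prop) continuous_const).mem_nhds hx
    have hlin : HasDerivAt (fun y => p * y + q) p x := by
      simpa using ((hasDerivAt_id x).const_mul p).add_const q
    set C := p ^ k * (descPochhammer 𝕜 k).eval (m : 𝕜)
    have hD : HasDerivAt (fun y => C * (p * y + q) ^ (m - k))
        (C * ((m - k : ℤ) * (p * x + q) ^ (m - k - 1) * p)) x :=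
      ((hasDerivAt_zpow (m - k) _ (Or.inl hx)).comp x hlin).const_mul C
    rw [iteratedDeriv_succ, (Filter.eventuallyEq_of_mem hU fun y hy => ih hy).deriv_eq, hD.deriv,
      descPochhammer_succ_eval, show m - k - 1 = m - (k + 1 : ℕ) by push_cast; ring]
    push_cast
    ring

end

section

variable {𝕜 : Type*} [NormedField 𝕜]

theorem HasSum.even_part [CharZero 𝕜] {a : ℕ → 𝕜} {t A B : 𝕜}
    (hA : HasSum (fun n => a n * t ^ n) A) (hB : HasSum (fun n => a n * (-t) ^ n) B) :
    HasSum (fun e => a (2 * e) * (t ^ 2) ^ e) ((A + B) / 2) := by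
  have hodd : ∀ n ∉ Set.range (2 * ·), a n * t ^ n + a n * (-t) ^ n = 0 := by
    intro n hn
    have : Odd n := Nat.not_even_iff_odd.mp fun ⟨m, hm⟩ => hn ⟨m, show 2 * m = n by omega⟩
    rw [this.neg_pow]
    ring
  have h := ((mul_right_injective₀ two_ne_zero).hasSum_iff hodd).mpr (hA.add hB)
  convert h.div_const 2 using 2 with e
  simp only [Function.comp_apply, (even_two_mul e).neg_pow, pow_mul]
  ring

theorem hasSum_choose_add_mul_sq [CharZero 𝕜] [CompleteSpace 𝕜] (k : ℕ) {t : 𝕜}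
    (ht : ‖t‖ < 1) :
    HasSum (fun e => ((2 * e + k).choose k : 𝕜) * (t ^ 2) ^ e)
      ((1 / (1 - t) ^ (k + 1) + 1 / (1 + t) ^ (k + 1)) / 2) := by
  have hB := hasSum_choose_mul_geometric_of_norm_lt_one k (r := -t) (by simpa using ht)
  rw [sub_neg_eq_add] at hB
  exact (hasSum_choose_mul_geometric_of_norm_lt_one k ht).even_part hB

theorem hasSum_pow_div_pow_succ {x w : 𝕜} (h : ‖x‖ < ‖w‖) :
    HasSum (fun n => x ^ n / w ^ (n + 1)) (1 / (w - x)) := by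
  have hw : w ≠ 0 := norm_pos_iff.mp ((norm_nonneg x).trans_lt h)
  have hr : ‖x / w‖ < 1 := by rwa [norm_div, div_lt_one ((norm_nonneg x).trans_lt h)]
  convert (hasSum_geometric_of_norm_lt_one hr).div_const w using 1
  · ext n; rw [div_pow, pow_succ, div_div]
  · have : w - x ≠ 0 := sub_ne_zero.mpr fun e => h.ne (by rw [e])
    field_simp

end

theorem hasSum_of_hasSum_snd_succ {M : Type*} [AddCommMonoid M] [TopologicalSpace M]
    [ContinuousAdd M] {f : ℕ × ℕ → M} {s : M} (hrow : ∀ d, f (d + 1, 0) = 0)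
    (h : HasSum (fun p : ℕ × ℕ => f (p.1, p.2 + 1)) s) : HasSum f (f (0, 0) + s) := by
  set F : ℕ × ℕ → M := fun p => if p.2 = 0 then 0 else f p
  have hinj : Function.Injective fun p : ℕ × ℕ => (p.1, p.2 + 1) := fun p q hpq => by
    simpa [Prod.ext_iff] using hpq
  have hF : HasSum F s := by
    refine (hinj.hasSum_iff fun p hp => if_pos ?_).mp (h.congr_fun fun p => by simp)
    by_contra hp2
    exact hp ⟨(p.1, p.2 - 1), by ext <;> simp; omega⟩
  refine ((hasSum_ite_eq (0, 0) (f (0, 0))).add hF).congr_fun fun ⟨d, e⟩ => ?_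
  rcases d with _ | d <;> rcases e with _ | e <;> simp [F, hrow]

noncomputable def residueDeriv (Λ : ℂ) (d1 d2 : ℕ) : ℂ :=
  iteratedDeriv (2 * d2 + 1) (fun u2 : ℂ =>
    iteratedDeriv (2 * d1 + 1) (fun u1 : ℂ =>
      u2 ^ 3 * (-2 * u1 - 2 * u2) ^ (2 * (d1 : ℤ) + 2 * (d2 : ℤ) - 1)) Λ) Λ

section

variable {Λ : ℂ}

theorem iteratedDeriv_cube_mul_zpow_fst (m : ℤ) (a : ℕ) {u : ℂ} (hu : u ≠ -Λ) :
    iteratedDeriv a (fun v : ℂ => u ^ 3 * (-2 * v - 2 * u) ^ m) Λ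
      = (-2) ^ a * (descPochhammer ℂ a).eval (m : ℂ)
        * (u ^ 3 * (-2 * u - 2 * Λ) ^ (m - a)) := by
  have hne : -2 * Λ + -(2 * u) ≠ 0 := fun h => hu (by linear_combination (-1/2 : ℂ) * h)
  simp only [sub_eq_add_neg (-2 * _) (2 * u), iteratedDeriv_const_mul_field,
    iteratedDeriv_affine_zpow _ _ m a hne]
  ring_nf

theorem iteratedDeriv_cube_mul_zpow (n : ℤ) (b : ℕ) (hΛ : Λ ≠ 0) :
    iteratedDeriv b (fun u : ℂ => u ^ 3 * (-2 * u - 2 * Λ) ^ n) Λ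
      = ∑ i ∈ range (b + 1), (b.choose i : ℂ) * ((3 : ℕ).descFactorial i * Λ ^ (3 - i)) *
          ((-2) ^ (b - i) * (descPochhammer ℂ (b - i)).eval (n : ℂ) *
            (-4 * Λ) ^ (n - (b - i : ℕ))) := by
  have hne : -2 * Λ - 2 * Λ ≠ 0 := fun h => hΛ (by linear_combination (-1/4 : ℂ) * h)
  have hsmooth : ContDiffAt ℂ b (fun u : ℂ => (-2 * u - 2 * Λ) ^ n) Λ :=
    (AnalyticAt.zpow (f := fun u : ℂ => -2 * u - 2 * Λ) (by fun_prop) hne).contDiffAt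
  rw [iteratedDeriv_fun_mul (by fun_prop) hsmooth]
  refine sum_congr rfl fun i _ => ?_
  simp only [iteratedDeriv_pow, sub_eq_add_neg (-2 * _) (2 * Λ)]
  rw [iteratedDeriv_affine_zpow _ _ n _ (by rwa [← sub_eq_add_neg])]
  ring_nf

theorem residueDeriv_eq (hΛ : Λ ≠ 0) (d1 d2 : ℕ) :
    residueDeriv Λ d1 d2 = (-2) ^ (2 * d1 + 1)
      * (descPochhammer ℂ (2 * d1 + 1)).eval ((2 * (d1 : ℤ) + 2 * (d2 : ℤ) - 1 : ℤ) : ℂ)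
      * iteratedDeriv (2 * d2 + 1)
          (fun u : ℂ => u ^ 3 * (-2 * u - 2 * Λ) ^ (2 * (d2 : ℤ) - 2)) Λ := by
  have hΛ' : Λ ≠ -Λ := fun h => hΛ (by linear_combination (1/2 : ℂ) * h)
  have hev : (fun u2 : ℂ => iteratedDeriv (2 * d1 + 1) (fun u1 : ℂ =>
      u2 ^ 3 * (-2 * u1 - 2 * u2) ^ (2 * (d1 : ℤ) + 2 * (d2 : ℤ) - 1)) Λ)
      =ᶠ[𝓝 Λ] fun u => (-2) ^ (2 * d1 + 1)
        * (descPochhammer ℂ (2 * d1 + 1)).eval ((2 * (d1 : ℤ) + 2 * (d2 : ℤ) - 1 : ℤ) : ℂ)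
        * (u ^ 3 * (-2 * u - 2 * Λ) ^ (2 * (d2 : ℤ) - 2)) := by
    filter_upwards [isOpen_ne.mem_nhds hΛ'] with u hu
    rw [iteratedDeriv_cube_mul_zpow_fst _ _ hu]
    congr 3
    push_cast
    ring
  rw [residueDeriv, hev.iteratedDeriv_eq, iteratedDeriv_const_mul_field]

theorem iteratedDeriv_cube_mul_pow_self (k : ℕ) (hΛ : Λ ≠ 0) :
    iteratedDeriv (k + 3) (fun u : ℂ => u ^ 3 * (-2 * u - 2 * Λ) ^ (k : ℤ)) Λ
      = ((k + 3)! : ℂ) * (-2) ^ k := by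
  -- By Leibniz, only the term putting all three derivatives on `u ^ 3` survives.
  rw [iteratedDeriv_cube_mul_zpow _ _ hΛ, sum_eq_single 3]
  · simp only [Nat.descFactorial_self, show k + 3 - 3 = k by omega, Int.cast_natCast,
      descPochhammer_eval_eq_descFactorial, sub_self, zpow_zero]
    rw [← Nat.add_choose_mul_factorial_mul_factorial k 3]
    push_cast
    ring
  · intro i hi hi3
    rcases lt_or_gt_of_ne hi3 with hlt | hgt
    · rw [Int.cast_natCast, descPochhammer_eval_eq_descFactorial,
        Nat.descFactorial_eq_zero_iff_lt.mpr (show k < k + 3 - i by omega)]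
      simp
    · simp [Nat.descFactorial_eq_zero_iff_lt.mpr hgt]
  · simp

theorem residueDeriv_zero_zero (hΛ : Λ ≠ 0) : residueDeriv Λ 0 0 = 1 / 4 := by
  rw [residueDeriv_eq hΛ, iteratedDeriv_cube_mul_zpow _ _ hΛ]
  simp [sum_range_succ, field]
  ring

theorem residueDeriv_succ_zero (hΛ : Λ ≠ 0) (d : ℕ) : residueDeriv Λ (d + 1) 0 = 0 := by
  rw [residueDeriv_eq hΛ,
    show 2 * ((d + 1 : ℕ) : ℤ) + 2 * ((0 : ℕ) : ℤ) - 1 = ((2 * d + 1 : ℕ) : ℤ) by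
      push_cast; ring,
    Int.cast_natCast, descPochhammer_eval_coe_nat_of_lt (by omega)]
  simp

theorem residueDeriv_succ_right (hΛ : Λ ≠ 0) (d1 e : ℕ) :
    residueDeriv Λ d1 (e + 1) = -(1 / 2) * 4 ^ (d1 + e + 1)
      * (2 * d1 + 2 * e + 1).choose (2 * d1 + 1) * ((2 * d1 + 1)! * (2 * (e + 1) + 1)!) := by
  rw [residueDeriv_eq hΛ,
    show 2 * (d1 : ℤ) + 2 * ((e + 1 : ℕ) : ℤ) - 1 = ((2 * d1 + 2 * e + 1 : ℕ) : ℤ) by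
      push_cast; ring,
    show 2 * ((e + 1 : ℕ) : ℤ) - 2 = ((2 * e : ℕ) : ℤ) by push_cast; ring,
    show 2 * (e + 1) + 1 = 2 * e + 3 by ring, iteratedDeriv_cube_mul_pow_self _ hΛ,
    Int.cast_natCast, descPochhammer_eval_eq_descFactorial,
    Nat.descFactorial_eq_factorial_mul_choose]
  push_cast
  rw [pow_succ, pow_mul, pow_mul]
  norm_num
  ring

end

section

variable {x y : ℂ}

theorem summable_choose_mul_pow_mul_pow (hx : ‖x‖ < 1 / 4) (hy : ‖y‖ < 1 / 4) :
    Summable fun p : ℕ × ℕ =>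
      ((2 * p.1 + 2 * p.2 + 1).choose (2 * p.1 + 1) : ℂ) * x ^ p.1 * y ^ p.2 := by
  have hgeom : Summable fun p : ℕ × ℕ => (4 * ‖x‖) ^ p.1 * (4 * ‖y‖) ^ p.2 :=
    .mul_of_nonneg (summable_geometric_of_lt_one (by positivity) (by linarith))
      (summable_geometric_of_lt_one (by positivity) (by linarith))
      (fun _ => by positivity) (fun _ => by positivity)
  refine .of_norm_bounded (hgeom.mul_left 2) fun p => ?_
  have hchoose : ((2 * p.1 + 2 * p.2 + 1).choose (2 * p.1 + 1) : ℝ)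
      ≤ 2 ^ (2 * p.1 + 2 * p.2 + 1) := by
    exact_mod_cast Nat.choose_le_two_pow _ _
  calc ‖((2 * p.1 + 2 * p.2 + 1).choose (2 * p.1 + 1) : ℂ) * x ^ p.1 * y ^ p.2‖
      = ((2 * p.1 + 2 * p.2 + 1).choose (2 * p.1 + 1) : ℝ) * ‖x‖ ^ p.1 * ‖y‖ ^ p.2 := by
        simp only [norm_mul, norm_pow, Complex.norm_natCast]
    _ ≤ 2 ^ (2 * p.1 + 2 * p.2 + 1) * ‖x‖ ^ p.1 * ‖y‖ ^ p.2 := by gcongr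
    _ = 2 * ((4 * ‖x‖) ^ p.1 * (4 * ‖y‖) ^ p.2) := by
        rw [mul_pow, mul_pow, show (4 : ℝ) = 2 ^ 2 by norm_num, ← pow_mul, ← pow_mul]
        ring

theorem hasSum_choose_mul_pow_mul_pow (hx : ‖x‖ < 1 / 4) (hy : ‖y‖ < 1 / 4) :
    HasSum (fun p : ℕ × ℕ =>
        ((2 * p.1 + 2 * p.2 + 1).choose (2 * p.1 + 1) : ℂ) * x ^ p.1 * y ^ p.2)
      ((1 + y - x) / ((1 - x - y) ^ 2 - 4 * (x * y))) := by
  obtain ⟨t, rfl⟩ : ∃ t : ℂ, t ^ 2 = y := IsAlgClosed.exists_pow_nat_eq y two_pos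
  have ht : ‖t‖ < 1 / 2 := by
    rw [norm_pow] at hy
    nlinarith [norm_nonneg t]
  have hlt : ∀ s : ℂ, ‖s‖ = ‖t‖ → ‖x‖ < ‖(1 - s) ^ 2‖ := by
    intro s hs
    have : 1 - ‖s‖ ≤ ‖1 - s‖ := by simpa using norm_sub_norm_le (1 : ℂ) s
    rw [norm_pow]
    nlinarith
  set g : ℕ → ℂ := fun a =>
    x ^ a * ((1 / (1 - t) ^ (2 * a + 1 + 1) + 1 / (1 + t) ^ (2 * a + 1 + 1)) / 2)
  have hrow : ∀ a : ℕ, HasSum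
      (fun b => ((2 * a + 2 * b + 1).choose (2 * a + 1) : ℂ) * x ^ a * (t ^ 2) ^ b) (g a) := by
    intro a
    refine ((hasSum_choose_add_mul_sq (2 * a + 1) (ht.trans (by norm_num))).mul_left
      (x ^ a)).congr_fun fun b => ?_
    rw [show 2 * a + 2 * b + 1 = 2 * b + (2 * a + 1) by ring]
    ring
  have hcol : HasSum g ((1 / ((1 - t) ^ 2 - x) + 1 / ((1 - -t) ^ 2 - x)) / 2) := by
    refine (((hasSum_pow_div_pow_succ (hlt t rfl)).add
      (hasSum_pow_div_pow_succ (hlt (-t) (norm_neg t)))).div_const 2).congr_fun fun a => ?_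
    rw [sub_neg_eq_add, ← pow_mul, ← pow_mul]
    ring
  have hval : (1 / ((1 - t) ^ 2 - x) + 1 / ((1 - -t) ^ 2 - x)) / 2
      = (1 + t ^ 2 - x) / ((1 - x - t ^ 2) ^ 2 - 4 * (x * t ^ 2)) := by
    have h₁ : (1 - t) ^ 2 - x ≠ 0 := sub_ne_zero.mpr fun e => (hlt t rfl).ne (by rw [e])
    have h₂ : (1 - -t) ^ 2 - x ≠ 0 :=
      sub_ne_zero.mpr fun e => (hlt (-t) (norm_neg t)).ne (by rw [e])
    rw [show (1 - x - t ^ 2) ^ 2 - 4 * (x * t ^ 2) = ((1 - t) ^ 2 - x) * ((1 - -t) ^ 2 - x) by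
      ring]
    field_simp
    ring
  have hsum := (summable_choose_mul_pow_mul_pow hx hy).hasSum
  rwa [(hsum.prod_fiberwise hrow).unique (hval ▸ hcol)] at hsum

end

theorem sq_sub_four_mul_ne_zero {x y : ℂ} (hx : ‖x‖ < 1 / 4) (hy : ‖y‖ < 1 / 4) :
    (1 - x - y) ^ 2 - 4 * (x * y) ≠ 0 := by
  have h₁ : 1 - ‖x‖ - ‖y‖ ≤ ‖1 - x - y‖ := by
    have := norm_sub_norm_le (1 - x) y
    have := norm_sub_norm_le (1 : ℂ) x
    simp only [norm_one] at *
    linarith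
  intro h
  have h₂ : ‖(1 - x - y) ^ 2‖ = ‖4 * (x * y)‖ := by rw [sub_eq_zero.mp h]
  simp only [norm_pow, norm_mul, Complex.norm_ofNat] at h₂
  nlinarith [norm_nonneg x, norm_nonneg y]

theorem stmt12 (Λ : ℂ) (hΛ : Λ ≠ 0) (c : ℕ → ℕ → ℂ)
    (hc : ∀ d1 d2 : ℕ, c d1 d2 =
      (1 / (((2*d1+1)! : ℂ) * ((2*d2+1)! : ℂ))) *
      iteratedDeriv (2*d2+1) (fun u2 : ℂ =>
        iteratedDeriv (2*d1+1) (fun u1 : ℂ =>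
          u2^3 * ((-2*u1 - 2*u2)^(2*(d1:ℤ)+2*(d2:ℤ)-1))) Λ) Λ) :
    ∀ z1 z2 : ℂ, ‖z1‖ < 1/100 → ‖z2‖ < 1/100 →
      HasSum (fun p : ℕ × ℕ => z1^p.1 * z2^p.2 * c p.1 p.2)
        (((1-4*z1)^2 - 16*z2*(1+z2)) / (4*(1 - 8*(z1+z2) + 16*(z1-z2)^2))) := by
  have hc' : ∀ d1 d2, c d1 d2
      = 1 / (((2 * d1 + 1)! : ℂ) * ((2 * d2 + 1)! : ℂ)) * residueDeriv Λ d1 d2 := hc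
  intro z1 z2 hz1 hz2
  have hx : ‖4 * z1‖ < 1 / 4 := by rw [norm_mul, Complex.norm_ofNat]; linarith
  have hy : ‖4 * z2‖ < 1 / 4 := by rw [norm_mul, Complex.norm_ofNat]; linarith
  have hshift : HasSum (fun p : ℕ × ℕ => z1 ^ p.1 * z2 ^ (p.2 + 1) * c p.1 (p.2 + 1))
      (-2 * z2 * ((1 + 4 * z2 - 4 * z1)
        / ((1 - 4 * z1 - 4 * z2) ^ 2 - 4 * (4 * z1 * (4 * z2))))) := by
    refine ((hasSum_choose_mul_pow_mul_pow hx hy).mul_left (-2 * z2)).congr_fun fun p => ?_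
    have h₁ : ((2 * p.1 + 1)! : ℂ) ≠ 0 := Nat.cast_ne_zero.mpr (Nat.factorial_ne_zero _)
    have h₂ : ((2 * (p.2 + 1) + 1)! : ℂ) ≠ 0 := Nat.cast_ne_zero.mpr (Nat.factorial_ne_zero _)
    rw [hc', residueDeriv_succ_right hΛ]
    field_simp
    ring
  have h := hasSum_of_hasSum_snd_succ (f := fun p : ℕ × ℕ => z1 ^ p.1 * z2 ^ p.2 * c p.1 p.2)
    (fun d => by simp [hc', residueDeriv_succ_zero hΛ]) hshift
  convert h using 1
  have hΔ : (1 - 4 * z1 - 4 * z2) ^ 2 - 4 * (4 * z1 * (4 * z2))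
      = 1 - 8 * (z1 + z2) + 16 * (z1 - z2) ^ 2 := by ring
  have hΔ₀ := hΔ ▸ sq_sub_four_mul_ne_zero hx hy
  rw [hΔ, hc', residueDeriv_zero_zero hΛ]
  field_simp
  ring
end

section
/- Let λ, p ∈ ℂ with λ ≠ 0, p ≠ 1 and 2p+1 ≠ 0, and define G : ℂ → ℂ → ℂ by G u1 u2 = u1^3 / ((-2*u1 - u2) * (u1 - p*λ) * (u2 - λ)^2 * (u1 - u2)). Then there exists ε > 0 such that for all real r1, r2 with 0 < r2 < r1 < ε: (1/(2πi))^2 · ∮_{|u2-λ|=r2} (∮_{|u1-pλ|=r1} G u1 u2 du1) du2 + (1/(2πi))^2 · ∮_{|u1-λ|=r1} (∮_{|u2-λ|=r2} G u1 u2 du2) du1 = -((p+1)*(3p+1)) / (3*(2p+1)^2). That is, the sum of the iterated residues of G at (pλ, λ) and (λ, λ) equals -6x with x = (p+1)(3p+1)/(18(2p+1)^2). -/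
/-! The integrand is `(u₂ - Λ)⁻² (u₁ - pΛ)⁻¹ R(u₁, u₂)` with `R = u₁³ / ((-2u₁ - u₂)(u₁ - u₂))`,
and on small polydiscs around `(pΛ, Λ)` and `(Λ, Λ)` no factor of the denominator of `R`
vanishes, except `u₁ - u₂` near the diagonal, which stays away from zero because `r₂ < r₁`.

At `(pΛ, Λ)` Cauchy's formula turns the `u₁`-integral into `R(pΛ, u₂)`, and Cauchy's formula for
the derivative turns the `u₂`-integral into `∂₂R(pΛ, Λ) = -p³(p+2)/((2p+1)²(p-1)²)`.
At `(Λ, Λ)` the `u₂`-integral gives `(u₁ - pΛ)⁻¹ ∂₂R(u₁, Λ)`, which acquires a double pole at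
`u₁ = Λ` from the factor `u₁ - u₂` of `R`; differentiating its regular part gives
`(2p-1)/(3(p-1)²)`. The poles at `p = 1` of the two residues cancel in their sum. -/

open Metric Complex Filter Topology Real

namespace LocalF1

theorem exists_pos_forall_closedBall_prod {X Y : Type*} [PseudoMetricSpace X]
    [PseudoMetricSpace Y] {P : X × Y → Prop} {a : X} {b : Y} (h : ∀ᶠ y in 𝓝 (a, b), P y) :
    ∃ ε > 0, ∀ r < ε, ∀ u ∈ closedBall a r, ∀ v ∈ closedBall b r, P (u, v) := by
  obtain ⟨ε, hε, hP⟩ := Metric.eventually_nhds_iff.1 h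
  refine ⟨ε, hε, fun r hr u hu v hv => hP ?_⟩
  rw [Prod.dist_eq]
  exact max_lt (lt_of_le_of_lt hu hr) (lt_of_le_of_lt hv hr)

variable {r₁ r₂ : ℝ}

section IteratedResidues

variable {f : ℂ → ℂ → ℂ} {a b : ℂ}

theorem circleIntegral_circleIntegral_simple_then_double_pole (hr₁ : 0 < r₁) (hr₂ : 0 < r₂)
    (hf₁ : ∀ v ∈ sphere b r₂, DifferentiableOn ℂ (f · v) (closedBall a r₁))
    (hf₂ : DifferentiableOn ℂ (f a) (closedBall b r₂)) :
    (∮ v in C(b, r₂), ∮ u in C(a, r₁), 1 / (v - b) ^ 2 * ((u - a)⁻¹ * f u v)) =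
      (2 * π * I) ^ 2 * deriv (f a) b := by
  calc (∮ v in C(b, r₂), ∮ u in C(a, r₁), 1 / (v - b) ^ 2 * ((u - a)⁻¹ * f u v))
      = ∮ v in C(b, r₂), (2 * π * I) * (1 / (v - b) ^ 2 * f a v) := by
        refine circleIntegral.integral_congr hr₂.le fun v hv => ?_
        have := (hf₁ v hv).circleIntegral_sub_inv_smul (mem_ball_self hr₁)
        simp only [smul_eq_mul] at this
        rw [circleIntegral.integral_const_mul, this]
        ring
    _ = (2 * π * I) ^ 2 * deriv (f a) b := by
        have := hf₂.deriv_eq_smul_circleIntegral hr₂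
        simp only [smul_eq_mul] at this
        rw [circleIntegral.integral_const_mul, this]
        ring

theorem circleIntegral_circleIntegral_double_pole_twice (hr₁ : 0 < r₁) (hr₂ : 0 < r₂)
    (hf : ∀ u ∈ sphere b r₁, DifferentiableOn ℂ (f u) (closedBall b r₂)) {g : ℂ → ℂ}
    (hfg : ∀ u ∈ sphere b r₁, deriv (f u) b = 1 / (u - b) ^ 2 * g u)
    (hg : DifferentiableOn ℂ g (closedBall b r₁)) :
    (∮ u in C(b, r₁), ∮ v in C(b, r₂), 1 / (v - b) ^ 2 * f u v) =
      (2 * π * I) ^ 2 * deriv g b := by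
  calc (∮ u in C(b, r₁), ∮ v in C(b, r₂), 1 / (v - b) ^ 2 * f u v)
      = ∮ u in C(b, r₁), (2 * π * I) * (1 / (u - b) ^ 2 * g u) := by
        refine circleIntegral.integral_congr hr₁.le fun u hu => ?_
        simpa only [smul_eq_mul, hfg u hu] using (hf u hu).deriv_eq_smul_circleIntegral hr₂
    _ = (2 * π * I) ^ 2 * deriv g b := by
        have := hg.deriv_eq_smul_circleIntegral hr₁
        simp only [smul_eq_mul] at this
        rw [circleIntegral.integral_const_mul, this]
        ring

end IteratedResidues

noncomputable def regularPart (u v : ℂ) : ℂ := u ^ 3 / ((-2 * u - v) * (u - v))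

-- `(u - pΛ)⁻¹ ∂₂R(u, Λ) = (u - Λ)⁻² * diagonalRegularPart Λ p u`
noncomputable def diagonalRegularPart (Λ p u : ℂ) : ℂ :=
  u ^ 3 * (-u - 2 * Λ) / ((u - p * Λ) * (-2 * u - Λ) ^ 2)

variable {Λ p : ℂ}

theorem integrand_eq_regularPart (u v : ℂ) :
    u ^ 3 / ((-2 * u - v) * (u - p * Λ) * (v - Λ) ^ 2 * (u - v)) =
      1 / (v - Λ) ^ 2 * ((u - p * Λ)⁻¹ * regularPart u v) := by
  simp only [regularPart, div_eq_mul_inv, mul_inv]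
  ring

theorem hasDerivAt_regularPart {u v : ℂ} (h₁ : -2 * u - v ≠ 0) (h₂ : u - v ≠ 0) :
    HasDerivAt (regularPart u) (u ^ 3 * (-u - 2 * v) / ((-2 * u - v) * (u - v)) ^ 2) v := by
  refine ((hasDerivAt_const v (u ^ 3)).div (((hasDerivAt_id v).const_sub (-2 * u)).mul
    ((hasDerivAt_id v).const_sub u)) (mul_ne_zero h₁ h₂)).congr_deriv ?_
  dsimp only [id, Pi.mul_apply, Pi.pow_apply, Pi.neg_apply]
  ring

theorem differentiableOn_regularPart_left {v : ℂ} {s : Set ℂ}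
    (h : ∀ u ∈ s, -2 * u - v ≠ 0 ∧ u - v ≠ 0) : DifferentiableOn ℂ (regularPart · v) s := by
  unfold regularPart
  exact DifferentiableOn.div (by fun_prop) (by fun_prop)
    fun u hu => mul_ne_zero (h u hu).1 (h u hu).2

theorem hasDerivAt_diagonalRegularPart (hΛ : Λ ≠ 0) (hp₁ : p ≠ 1) :
    HasDerivAt (diagonalRegularPart Λ p) ((2 * p - 1) / (3 * (p - 1) ^ 2)) Λ := by
  have hp : p - 1 ≠ 0 := sub_ne_zero.2 hp₁
  have hden_ne : (Λ - p * Λ) * (-2 * Λ - Λ) ^ 2 ≠ 0 := by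
    have : (Λ - p * Λ) * (-2 * Λ - Λ) ^ 2 = -9 * Λ ^ 3 * (p - 1) := by ring
    rw [this]; simp [hΛ, hp]
  refine (((hasDerivAt_pow 3 Λ).mul ((hasDerivAt_id Λ).neg.sub_const (2 * Λ))).div
    (((hasDerivAt_id Λ).sub_const (p * Λ)).mul
      ((((hasDerivAt_id Λ).const_mul (-2)).sub_const Λ).pow 2)) hden_ne).congr_deriv ?_
  dsimp only [id, Pi.mul_apply, Pi.pow_apply, Pi.neg_apply]
  field_simp
  ring

theorem differentiableOn_diagonalRegularPart {s : Set ℂ}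
    (h : ∀ u ∈ s, -2 * u - Λ ≠ 0 ∧ u - p * Λ ≠ 0) :
    DifferentiableOn ℂ (diagonalRegularPart Λ p) s := by
  unfold diagonalRegularPart
  exact DifferentiableOn.div (by fun_prop) (by fun_prop)
    fun u hu => mul_ne_zero (h u hu).2 (pow_ne_zero 2 (h u hu).1)

theorem eventually_offDiagonal_ne_zero (hΛ : Λ ≠ 0) (hp₁ : p ≠ 1) (hp₂ : 2 * p + 1 ≠ 0) :
    ∀ᶠ y in 𝓝 (p * Λ, Λ), -2 * y.1 - y.2 ≠ 0 ∧ y.1 - y.2 ≠ 0 := by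
  have h₁ : -2 * (p * Λ) - Λ ≠ 0 := by
    rw [show -2 * (p * Λ) - Λ = -(Λ * (2 * p + 1)) by ring]; simp [hΛ, hp₂]
  have h₂ : p * Λ - Λ ≠ 0 := by
    rw [show p * Λ - Λ = Λ * (p - 1) by ring]; simp [hΛ, sub_ne_zero.2 hp₁]
  exact ((by fun_prop : Continuous fun y : ℂ × ℂ => -2 * y.1 - y.2).continuousAt.eventually_ne
    h₁).and ((by fun_prop : Continuous fun y : ℂ × ℂ => y.1 - y.2).continuousAt.eventually_ne h₂)

theorem eventually_diagonal_ne_zero (hΛ : Λ ≠ 0) (hp₁ : p ≠ 1) :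
    ∀ᶠ y in 𝓝 (Λ, Λ), -2 * y.1 - y.2 ≠ 0 ∧ y.1 - p * Λ ≠ 0 := by
  have h₁ : -2 * Λ - Λ ≠ 0 := by
    rw [show -2 * Λ - Λ = -3 * Λ by ring]; simp [hΛ]
  have h₂ : Λ - p * Λ ≠ 0 := by
    rw [show Λ - p * Λ = Λ * (1 - p) by ring]; simp [hΛ, sub_ne_zero.2 hp₁.symm]
  exact ((by fun_prop : Continuous fun y : ℂ × ℂ => -2 * y.1 - y.2).continuousAt.eventually_ne
    h₁).and ((by fun_prop : Continuous fun y : ℂ × ℂ => y.1 - p * Λ).continuousAt.eventually_ne h₂)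

theorem circleIntegral_circleIntegral_offDiagonal (hΛ : Λ ≠ 0) (hr₁ : 0 < r₁) (hr₂ : 0 < r₂)
    (hreg : ∀ u ∈ closedBall (p * Λ) r₁, ∀ v ∈ closedBall Λ r₂, -2 * u - v ≠ 0 ∧ u - v ≠ 0) :
    (∮ v in C(Λ, r₂), ∮ u in C(p * Λ, r₁), 1 / (v - Λ) ^ 2 * ((u - p * Λ)⁻¹ * regularPart u v)) =
      (2 * π * I) ^ 2 * (-(p ^ 3 * (p + 2)) / ((2 * p + 1) ^ 2 * (p - 1) ^ 2)) := by
  have hcenter := hreg (p * Λ) (mem_closedBall_self hr₁.le)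
  rw [circleIntegral_circleIntegral_simple_then_double_pole hr₁ hr₂
    (fun v hv => differentiableOn_regularPart_left fun u hu => hreg u hu v
      (sphere_subset_closedBall hv))
    (fun v hv => (hasDerivAt_regularPart (hcenter v hv).1 (hcenter v hv).2).differentiableAt
      |>.differentiableWithinAt),
    (hasDerivAt_regularPart (hcenter Λ (mem_closedBall_self hr₂.le)).1
      (hcenter Λ (mem_closedBall_self hr₂.le)).2).deriv]
  congr 1
  field_simp
  ring

theorem circleIntegral_circleIntegral_diagonal (hΛ : Λ ≠ 0) (hp₁ : p ≠ 1) (hr₂ : 0 < r₂)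
    (hr₂₁ : r₂ < r₁)
    (hreg : ∀ u ∈ closedBall Λ r₁, ∀ v ∈ closedBall Λ r₂, -2 * u - v ≠ 0 ∧ u - p * Λ ≠ 0) :
    (∮ u in C(Λ, r₁), ∮ v in C(Λ, r₂), 1 / (v - Λ) ^ 2 * ((u - p * Λ)⁻¹ * regularPart u v)) =
      (2 * π * I) ^ 2 * ((2 * p - 1) / (3 * (p - 1) ^ 2)) := by
  have hoff : ∀ u ∈ sphere Λ r₁, ∀ v ∈ closedBall Λ r₂, u - v ≠ 0 := fun u hu v hv huv => by
    rw [sub_eq_zero.1 huv, mem_sphere] at hu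
    rw [mem_closedBall] at hv
    linarith
  have hderiv : ∀ u ∈ sphere Λ r₁, ∀ v ∈ closedBall Λ r₂, HasDerivAt (regularPart u)
      (u ^ 3 * (-u - 2 * v) / ((-2 * u - v) * (u - v)) ^ 2) v := fun u hu v hv =>
    hasDerivAt_regularPart (hreg u (sphere_subset_closedBall hu) v hv).1 (hoff u hu v hv)
  rw [circleIntegral_circleIntegral_double_pole_twice (hr₂.trans hr₂₁) hr₂
    (fun u hu v hv => ((hderiv u hu v hv).differentiableAt.const_mul _).differentiableWithinAt)
    (g := diagonalRegularPart Λ p) (fun u hu => ?_)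
    (differentiableOn_diagonalRegularPart fun u hu =>
      hreg u hu Λ (mem_closedBall_self hr₂.le)),
    (hasDerivAt_diagonalRegularPart hΛ hp₁).deriv]
  rw [((hderiv u hu Λ (mem_closedBall_self hr₂.le)).const_mul _).deriv, diagonalRegularPart]
  simp only [div_eq_mul_inv, mul_inv, mul_pow]
  ring

theorem residue_sum (hp₁ : p ≠ 1) (hp₂ : 2 * p + 1 ≠ 0) :
    -(p ^ 3 * (p + 2)) / ((2 * p + 1) ^ 2 * (p - 1) ^ 2) + (2 * p - 1) / (3 * (p - 1) ^ 2) =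
      -((p + 1) * (3 * p + 1)) / (3 * (2 * p + 1) ^ 2) := by
  have hp : p - 1 ≠ 0 := sub_ne_zero.2 hp₁
  have h₁ : (2 * p + 1) ^ 2 * (p - 1) ^ 2 ≠ 0 := by simp [hp, hp₂]
  have h₂ : 3 * (p - 1) ^ 2 ≠ 0 := by simp [hp]
  have h₃ : 3 * (2 * p + 1) ^ 2 ≠ 0 := by simp [hp₂]
  rw [div_add_div _ _ h₁ h₂, div_eq_div_iff (mul_ne_zero h₁ h₂) h₃]
  ring

end LocalF1

open LocalF1

theorem stmt13 (Λ p : ℂ) (hΛ : Λ ≠ 0) (hp1 : p ≠ 1) (hp2 : 2*p + 1 ≠ 0)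
    (G : ℂ → ℂ → ℂ)
    (hG : ∀ u1 u2 : ℂ, G u1 u2 =
      u1^3 / ((-2*u1 - u2) * (u1 - p*Λ) * (u2 - Λ)^2 * (u1 - u2))) :
    ∃ ε > 0, ∀ r1 r2 : ℝ, 0 < r2 → r2 < r1 → r1 < ε →
      (1/(2*(Real.pi : ℂ)*Complex.I))^2 *
        (∮ u2 in C(Λ, r2), (∮ u1 in C(p*Λ, r1), G u1 u2)) +
      (1/(2*(Real.pi : ℂ)*Complex.I))^2 *
        (∮ u1 in C(Λ, r1), (∮ u2 in C(Λ, r2), G u1 u2)) =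
      -((p+1)*(3*p+1)) / (3*(2*p+1)^2) := by
  obtain ⟨ε₁, hε₁, hoffDiag⟩ :=
    exists_pos_forall_closedBall_prod (eventually_offDiagonal_ne_zero hΛ hp1 hp2)
  obtain ⟨ε₂, hε₂, hdiag⟩ := exists_pos_forall_closedBall_prod (eventually_diagonal_ne_zero hΛ hp1)
  refine ⟨min ε₁ ε₂, lt_min hε₁ hε₂, fun r1 r2 hr2 hr21 hr1 => ?_⟩
  have hball : closedBall Λ r2 ⊆ closedBall Λ r1 := closedBall_subset_closedBall hr21.le
  obtain rfl : G = fun u v => 1 / (v - Λ) ^ 2 * ((u - p * Λ)⁻¹ * regularPart u v) := by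
    funext u v
    rw [hG, integrand_eq_regularPart]
  rw [circleIntegral_circleIntegral_offDiagonal hΛ (hr2.trans hr21) hr2 fun u hu v hv =>
      hoffDiag r1 (hr1.trans_le (min_le_left _ _)) u hu v (hball hv),
    circleIntegral_circleIntegral_diagonal hΛ hp1 hr2 hr21 fun u hu v hv =>
      hdiag r1 (hr1.trans_le (min_le_right _ _)) u hu v (hball hv),
    ← residue_sum hp1 hp2]
  field_simp
end

section
/- Let λ, p, q ∈ ℂ with λ ≠ 0, 2p+1 ≠ 0, 2q+3 ≠ 0 and p ≠ q+1, and define G : ℂ → ℂ → ℂ by G u1 u2 = u1^3 / ((-2*u1 - u2) * (u1 - p*λ) * (u2 - λ)^2 * (u1 - u2 - q*λ)). Then there exists ε > 0 such that for all real r1, r2 with 0 < r2 < r1 < ε: (1/(2πi))^2 · ∮_{|u2-λ|=r2} (∮_{|u1-pλ|=r1} G u1 u2 du1) du2 + (1/(2πi))^2 · ∮_{|u1-(1+q)λ|=r1} (∮_{|u2-λ|=r2} G u1 u2 du2) du1 = -((2*q+3)^2*p^2 + (4*q^2+15*q+12)*p + (q+1)*(q+3)) / ((2*p+1)^2*(2*q+3)^2).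 That is, the sum of the iterated residues of G at (pλ, λ) and ((1+q)λ, λ) equals -6x with x = ((2q+3)^2p^2 + (4q^2+15q+12)p + (q+1)(q+3)) / (6(2p+1)^2(2q+3)^2). -/
/-!
Both iterated integrals are evaluated by Cauchy's integral formula. Integrating first in `u1`
around `pΛ` picks up a simple pole and leaves `2πi · h₁(u2) / (u2 - Λ)²`; integrating first in `u2`
around `Λ` picks up a double pole, and the resulting derivative in `u2` has a double pole at
`u1 = (1 + q)Λ`, leaving `2πi · h₂(u1) / (u1 - (1 + q)Λ)²`. The outer integrals are then
`(2πi)² h₁'(Λ)` and `(2πi)² h₂'((1 + q)Λ)`, and the claim is a rational identity in `p, q`.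
The remaining linear factors of the denominator stay away from zero on small enough
polydiscs because they do not vanish at the centres.
-/

open scoped Nat
open Metric Complex Real

theorem circleIntegral_div_sub_center {f : ℂ → ℂ} {c : ℂ} {R : ℝ} (hR : 0 < R)
    (hf : DifferentiableOn ℂ f (closedBall c R)) :
    ∮ z in C(c, R), f z / (z - c) = 2 * π * I * f c := by
  simpa [div_eq_inv_mul] using hf.circleIntegral_sub_inv_smul (mem_ball_self hR)

theorem circleIntegral_div_sub_center_sq {f : ℂ → ℂ} {c : ℂ} {R : ℝ} (hR : 0 < R)
    (hf : DifferentiableOn ℂ f (closedBall c R)) :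
    ∮ z in C(c, R), f z / (z - c) ^ 2 = 2 * π * I * deriv f c := by
  simpa [div_eq_inv_mul] using hf.deriv_eq_smul_circleIntegral hR

theorem hasDerivAt_div_sub_mul_sub {𝕜 : Type*} [NontriviallyNormedField 𝕜] {a b c u : 𝕜}
    (ha : a - u ≠ 0) (hb : b - u ≠ 0) :
    HasDerivAt (fun z => c / ((a - z) * (b - z)))
      (c * (a + b - 2 * u) / ((a - u) * (b - u)) ^ 2) u := by
  refine ((hasDerivAt_const u c).div (((hasDerivAt_id u).const_sub a).mul
    ((hasDerivAt_id u).const_sub b)) (mul_ne_zero ha hb)).congr_deriv ?_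
  simp only [Pi.mul_apply, id_eq]
  ring

theorem exists_pos_closedBall_prod_subset {α β : Type*} [PseudoMetricSpace α] [PseudoMetricSpace β]
    {U : Set (α × β)} (hU : IsOpen U) {a : α} {b : β} (hab : (a, b) ∈ U) :
    ∃ ε > 0, ∀ r < ε, closedBall a r ×ˢ closedBall b r ⊆ U := by
  obtain ⟨ε, hε, hsub⟩ := Metric.isOpen_iff.1 hU _ hab
  exact ⟨ε, hε, fun r hr => closedBall_prod_same a b r ▸ (closedBall_subset_ball hr).trans hsub⟩

theorem sub_ne_sub_of_mem_sphere_of_mem_closedBall {E : Type*} [SeminormedAddCommGroup E]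
    {a b z w : E} {r s : ℝ} (hrs : s < r) (hz : z ∈ sphere a r) (hw : w ∈ closedBall b s) :
    z - a ≠ w - b := by
  rw [mem_sphere_iff_norm] at hz
  rw [mem_closedBall_iff_norm] at hw
  intro h; rw [h] at hz; linarith

noncomputable def yukawaIntegrand (Λ p q u1 u2 : ℂ) : ℂ :=
  u1 ^ 3 / ((-2 * u1 - u2) * (u1 - p * Λ) * (u2 - Λ) ^ 2 * (u1 - u2 - q * Λ))

/-- `Res_{u1 = pΛ} yukawaIntegrand = yukawaResidueAtFirstPole u2 / (u2 - Λ) ^ 2`. -/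
noncomputable def yukawaResidueAtFirstPole (Λ p q u2 : ℂ) : ℂ :=
  (p * Λ) ^ 3 / ((-2 * (p * Λ) - u2) * (p * Λ - q * Λ - u2))

/-- `Res_{u2 = Λ} yukawaIntegrand = yukawaResidueAtSecondPole u1 / (u1 - (1 + q) * Λ) ^ 2`. -/
noncomputable def yukawaResidueAtSecondPole (Λ p q u1 : ℂ) : ℂ :=
  -(u1 ^ 3 * (u1 + (2 + q) * Λ)) / ((-2 * u1 - Λ) ^ 2 * (u1 - p * Λ))

section IteratedResidues

variable {Λ p q : ℂ} {r1 r2 : ℝ}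

theorem circleIntegral_yukawaIntegrand_first {u2 : ℂ} (hr1 : 0 < r1) (hr2 : 0 < r2)
    (hu2 : u2 ∈ sphere Λ r2)
    (hne : ∀ u1 ∈ closedBall (p * Λ) r1, -2 * u1 - u2 ≠ 0 ∧ u1 - u2 - q * Λ ≠ 0) :
    ∮ u1 in C(p * Λ, r1), yukawaIntegrand Λ p q u1 u2 =
      2 * π * I * (yukawaResidueAtFirstPole Λ p q u2 / (u2 - Λ) ^ 2) := by
  have hu2Λ : u2 - Λ ≠ 0 := sub_ne_zero.2 (ne_of_mem_sphere hu2 hr2.ne')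
  have hf : DifferentiableOn ℂ
      (fun u1 => u1 ^ 3 / ((-2 * u1 - u2) * (u2 - Λ) ^ 2 * (u1 - u2 - q * Λ)))
      (closedBall (p * Λ) r1) := by
    refine DifferentiableOn.div (by fun_prop) (by fun_prop) fun u1 hu1 => ?_
    obtain ⟨h1, h2⟩ := hne u1 hu1
    exact mul_ne_zero (mul_ne_zero h1 (pow_ne_zero 2 hu2Λ)) h2
  calc ∮ u1 in C(p * Λ, r1), yukawaIntegrand Λ p q u1 u2
      = ∮ u1 in C(p * Λ, r1),
          u1 ^ 3 / ((-2 * u1 - u2) * (u2 - Λ) ^ 2 * (u1 - u2 - q * Λ)) / (u1 - p * Λ) :=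
        circleIntegral.integral_congr hr1.le fun u1 _ => by
          simp only [yukawaIntegrand, div_eq_mul_inv, mul_inv]; ring
    _ = 2 * π * I * (yukawaResidueAtFirstPole Λ p q u2 / (u2 - Λ) ^ 2) := by
        rw [circleIntegral_div_sub_center hr1 hf]
        simp only [yukawaResidueAtFirstPole, div_eq_mul_inv, mul_inv]; ring

theorem circleIntegral_circleIntegral_yukawaIntegrand_first (hr1 : 0 < r1) (hr2 : 0 < r2)
    (hne : ∀ u1 ∈ closedBall (p * Λ) r1, ∀ u2 ∈ closedBall Λ r2,
      -2 * u1 - u2 ≠ 0 ∧ u1 - u2 - q * Λ ≠ 0) :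
    ∮ u2 in C(Λ, r2), ∮ u1 in C(p * Λ, r1), yukawaIntegrand Λ p q u1 u2 =
      (2 * π * I) ^ 2 * deriv (yukawaResidueAtFirstPole Λ p q) Λ := by
  have hh : DifferentiableOn ℂ (yukawaResidueAtFirstPole Λ p q) (closedBall Λ r2) := by
    refine DifferentiableOn.div (by fun_prop) (by fun_prop) fun u2 hu2 => ?_
    obtain ⟨h1, h2⟩ := hne _ (mem_closedBall_self hr1.le) u2 hu2
    exact mul_ne_zero h1 (by rwa [sub_right_comm])
  rw [circleIntegral.integral_congr hr2.le fun u2 hu2 =>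
      circleIntegral_yukawaIntegrand_first hr1 hr2 hu2 fun u1 hu1 =>
        hne u1 hu1 u2 (sphere_subset_closedBall hu2),
    circleIntegral.integral_const_mul, circleIntegral_div_sub_center_sq hr2 hh]
  ring

theorem circleIntegral_yukawaIntegrand_second {u1 : ℂ} (hr2 : 0 < r2) (hr21 : r2 < r1)
    (hu1 : u1 ∈ sphere ((1 + q) * Λ) r1)
    (hne : ∀ u2 ∈ closedBall Λ r2, -2 * u1 - u2 ≠ 0 ∧ u1 - p * Λ ≠ 0) :
    ∮ u2 in C(Λ, r2), yukawaIntegrand Λ p q u1 u2 =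
      2 * π * I * (yukawaResidueAtSecondPole Λ p q u1 / (u1 - (1 + q) * Λ) ^ 2) := by
  -- The factor `u1 - u2 - qΛ` vanishes at the centre; the circles are kept apart by `r2 < r1`.
  have hsep : ∀ u2 ∈ closedBall Λ r2, u1 - q * Λ - u2 ≠ 0 := fun u2 hu2 h =>
    sub_ne_sub_of_mem_sphere_of_mem_closedBall hr21 hu1 hu2 (by linear_combination h)
  have hk : DifferentiableOn ℂ
      (fun u2 => u1 ^ 3 / (u1 - p * Λ) / ((-2 * u1 - u2) * (u1 - q * Λ - u2)))
      (closedBall Λ r2) :=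
    DifferentiableOn.div (by fun_prop) (by fun_prop) fun u2 hu2 =>
      mul_ne_zero (hne u2 hu2).1 (hsep u2 hu2)
  have hcentre := mem_closedBall_self (x := Λ) hr2.le
  calc ∮ u2 in C(Λ, r2), yukawaIntegrand Λ p q u1 u2
      = ∮ u2 in C(Λ, r2),
          u1 ^ 3 / (u1 - p * Λ) / ((-2 * u1 - u2) * (u1 - q * Λ - u2)) / (u2 - Λ) ^ 2 :=
        circleIntegral.integral_congr hr2.le fun u2 _ => by
          simp only [yukawaIntegrand, div_eq_mul_inv, mul_inv]; ring
    _ = 2 * π * I * (yukawaResidueAtSecondPole Λ p q u1 / (u1 - (1 + q) * Λ) ^ 2) := by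
        rw [circleIntegral_div_sub_center_sq hr2 hk,
          (hasDerivAt_div_sub_mul_sub (hne Λ hcentre).1 (hsep Λ hcentre)).deriv]
        simp only [yukawaResidueAtSecondPole, div_eq_mul_inv, mul_inv, mul_pow]
        ring

theorem circleIntegral_circleIntegral_yukawaIntegrand_second (hr2 : 0 < r2) (hr21 : r2 < r1)
    (hne : ∀ u1 ∈ closedBall ((1 + q) * Λ) r1, ∀ u2 ∈ closedBall Λ r2,
      -2 * u1 - u2 ≠ 0 ∧ u1 - p * Λ ≠ 0) :
    ∮ u1 in C((1 + q) * Λ, r1), ∮ u2 in C(Λ, r2), yukawaIntegrand Λ p q u1 u2 =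
      (2 * π * I) ^ 2 * deriv (yukawaResidueAtSecondPole Λ p q) ((1 + q) * Λ) := by
  have hr1 := hr2.trans hr21
  have hh : DifferentiableOn ℂ (yukawaResidueAtSecondPole Λ p q) (closedBall ((1 + q) * Λ) r1) := by
    refine DifferentiableOn.div (by fun_prop) (by fun_prop) fun u1 hu1 => ?_
    obtain ⟨h1, h2⟩ := hne u1 hu1 Λ (mem_closedBall_self hr2.le)
    exact mul_ne_zero (pow_ne_zero 2 h1) h2
  rw [circleIntegral.integral_congr hr1.le fun u1 hu1 =>
      circleIntegral_yukawaIntegrand_second hr2 hr21 hu1 (hne u1 (sphere_subset_closedBall hu1)),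
    circleIntegral.integral_const_mul, circleIntegral_div_sub_center_sq hr1 hh]
  ring

end IteratedResidues

section ResidueValues

variable {Λ p q : ℂ}

theorem deriv_yukawaResidueAtFirstPole (hΛ : Λ ≠ 0) (hp : 2 * p + 1 ≠ 0) (hpq : p ≠ q + 1) :
    deriv (yukawaResidueAtFirstPole Λ p q) Λ =
      -(p ^ 3 * (p + q + 2)) / ((2 * p + 1) ^ 2 * (p - q - 1) ^ 2) := by
  have h1 : -2 * (p * Λ) - Λ ≠ 0 := fun h => mul_ne_zero hp hΛ (by linear_combination -h)
  have h2 : p * Λ - q * Λ - Λ ≠ 0 :=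
    fun h => mul_ne_zero (sub_ne_zero.2 hpq) hΛ (by linear_combination h)
  have h3 : p - q - 1 ≠ 0 := fun h => hpq (by linear_combination h)
  have hder : HasDerivAt (yukawaResidueAtFirstPole Λ p q) _ Λ := hasDerivAt_div_sub_mul_sub h1 h2
  rw [hder.deriv]
  field_simp
  ring

theorem deriv_yukawaResidueAtSecondPole (hΛ : Λ ≠ 0) (hq : 2 * q + 3 ≠ 0) (hpq : p ≠ q + 1) :
    deriv (yukawaResidueAtSecondPole Λ p q) ((1 + q) * Λ) =
      -((q + 1) ^ 2 * ((q + 1) * (q + 3) - 3 * p * (q + 2))) /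
        ((2 * q + 3) ^ 2 * (p - q - 1) ^ 2) := by
  have h1 : -2 * ((1 + q) * Λ) - Λ ≠ 0 := fun h => mul_ne_zero hq hΛ (by linear_combination -h)
  have h2 : (1 + q) * Λ - p * Λ ≠ 0 :=
    fun h => mul_ne_zero (sub_ne_zero.2 hpq) hΛ (by linear_combination -h)
  have h3 : p - q - 1 ≠ 0 := fun h => hpq (by linear_combination h)
  have hder : HasDerivAt (yukawaResidueAtSecondPole Λ p q) _ ((1 + q) * Λ) :=
    (((hasDerivAt_pow 3 _).mul ((hasDerivAt_id' _).add_const ((2 + q) * Λ))).neg).div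
      ((((hasDerivAt_id' _).const_mul (-2)).sub_const Λ).pow 2 |>.mul
        ((hasDerivAt_id' _).sub_const (p * Λ))) (mul_ne_zero (pow_ne_zero 2 h1) h2)
  rw [hder.deriv]
  simp only [Pi.mul_apply, Pi.neg_apply, Pi.pow_apply]
  rw [div_eq_div_iff (pow_ne_zero 2 (mul_ne_zero (pow_ne_zero 2 h1) h2)) (by positivity)]
  ring

theorem yukawa_residue_sum (hp : 2 * p + 1 ≠ 0) (hq : 2 * q + 3 ≠ 0) (hpq : p ≠ q + 1) :
    -(p ^ 3 * (p + q + 2)) / ((2 * p + 1) ^ 2 * (p - q - 1) ^ 2) +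
      -((q + 1) ^ 2 * ((q + 1) * (q + 3) - 3 * p * (q + 2))) /
        ((2 * q + 3) ^ 2 * (p - q - 1) ^ 2) =
      -((2*q+3)^2*p^2 + (4*q^2+15*q+12)*p + (q+1)*(q+3)) / ((2*p+1)^2*(2*q+3)^2) := by
  have h3 : p - q - 1 ≠ 0 := fun h => hpq (by linear_combination h)
  rw [div_add_div _ _ (by positivity) (by positivity),
    div_eq_div_iff (by positivity) (by positivity)]
  ring

end ResidueValues

theorem stmt17 (Λ p q : ℂ) (hΛ : Λ ≠ 0) (hp : 2*p + 1 ≠ 0)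
    (hq : 2*q + 3 ≠ 0) (hpq : p ≠ q + 1)
    (G : ℂ → ℂ → ℂ)
    (hG : ∀ u1 u2 : ℂ, G u1 u2 =
      u1^3 / ((-2*u1 - u2) * (u1 - p*Λ) * (u2 - Λ)^2 * (u1 - u2 - q*Λ))) :
    ∃ ε > 0, ∀ r1 r2 : ℝ, 0 < r2 → r2 < r1 → r1 < ε →
      (1/(2*(Real.pi : ℂ)*Complex.I))^2 *
        (∮ u2 in C(Λ, r2), (∮ u1 in C(p*Λ, r1), G u1 u2)) +
      (1/(2*(Real.pi : ℂ)*Complex.I))^2 *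
        (∮ u1 in C((1+q)*Λ, r1), (∮ u2 in C(Λ, r2), G u1 u2)) =
      -((2*q+3)^2*p^2 + (4*q^2+15*q+12)*p + (q+1)*(q+3)) / ((2*p+1)^2*(2*q+3)^2) := by
  obtain rfl : G = yukawaIntegrand Λ p q := funext fun u1 => funext (hG u1)
  obtain ⟨ε₁, hε₁, hball₁⟩ := exists_pos_closedBall_prod_subset
    (a := p * Λ) (b := Λ)
    (U := {x : ℂ × ℂ | -2 * x.1 - x.2 ≠ 0 ∧ x.1 - x.2 - q * Λ ≠ 0})
    ((isOpen_ne_fun (by fun_prop) continuous_const).inter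
      (isOpen_ne_fun (by fun_prop) continuous_const))
    ⟨fun h => mul_ne_zero hp hΛ (by linear_combination -h),
      fun h => mul_ne_zero (sub_ne_zero.2 hpq) hΛ (by linear_combination h)⟩
  obtain ⟨ε₂, hε₂, hball₂⟩ := exists_pos_closedBall_prod_subset
    (a := (1 + q) * Λ) (b := Λ)
    (U := {x : ℂ × ℂ | -2 * x.1 - x.2 ≠ 0 ∧ x.1 - p * Λ ≠ 0})
    ((isOpen_ne_fun (by fun_prop) continuous_const).inter
      (isOpen_ne_fun (by fun_prop) continuous_const))
    ⟨fun h => mul_ne_zero hq hΛ (by linear_combination -h),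
      fun h => mul_ne_zero (sub_ne_zero.2 hpq) hΛ (by linear_combination -h)⟩
  refine ⟨min ε₁ ε₂, lt_min hε₁ hε₂, fun r1 r2 hr2 hr21 hr1 => ?_⟩
  have hsub : closedBall Λ r2 ⊆ closedBall Λ r1 := closedBall_subset_closedBall hr21.le
  rw [circleIntegral_circleIntegral_yukawaIntegrand_first (hr2.trans hr21) hr2
      fun u1 hu1 u2 hu2 =>
        hball₁ r1 (hr1.trans_le (min_le_left _ _)) (Set.mk_mem_prod hu1 (hsub hu2)),
    circleIntegral_circleIntegral_yukawaIntegrand_second hr2 hr21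
      fun u1 hu1 u2 hu2 =>
        hball₂ r1 (hr1.trans_le (min_le_right _ _)) (Set.mk_mem_prod hu1 (hsub hu2)),
    deriv_yukawaResidueAtFirstPole hΛ hp hpq, deriv_yukawaResidueAtSecondPole hΛ hq hpq,
    ← yukawa_residue_sum hp hq hpq, ← mul_add, ← mul_add, ← mul_assoc, ← mul_pow,
    one_div_mul_cancel two_pi_I_ne_zero, one_pow, one_mul]
end
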